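/- arXiv:1910.01626 — 6 statements merged into one kernel-verified Lean document; each statement's English description precedes it below -/
import Mathlib

section
/- Let (x_n) be a bounded sequence in a Banach space X. Then there exists an infinite subset M of the natural numbers such that the double sequence ‖x_i − x_j‖ converges as i, j ∈ M tend to infinity (i.e., for every ε > 0 there is N such that for all i, j, k, l ∈ M with i, j, k, l ≥ N, |‖x_i − x_j‖ − ‖x_k − x_l‖| < ε, with i < j and k < l). -/
/-- Pigeonhole: a finite coloring of an infinite set of naturals has an infinite color class. -/
lemma pigeon_infinite {k : Type} [Finite k] (c : ℕ → k) {S : Set ℕ} (hS : S.Infinite) :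
    ∃ j : k, {n ∈ S | c n = j}.Infinite := by
  by_contra h
  push_neg at h
  have : S ⊆ ⋃ j : k, {n ∈ S | c n = j} := by
    intro n hn; exact Set.mem_iUnion.2 ⟨c n, hn, rfl⟩
  exact hS (Set.Finite.subset (Set.finite_iUnion h) this)

/-- One step of the Ramsey construction. -/
lemma ramsey_step {k : Type} [Finite k] (f : ℕ → ℕ → k) (S : Set ℕ) (hS : S.Infinite) :
    ∃ p : ℕ × Set ℕ, p.1 ∈ S ∧ p.2 ⊆ S ∧ p.2.Infinite ∧ (∀ m ∈ p.2, p.1 < m) ∧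
      ∃ c, ∀ m ∈ p.2, f p.1 m = c := by
  obtain ⟨a, ha⟩ := hS.nonempty
  have hS' : (S \ Set.Iic a).Infinite := hS.diff (Set.finite_Iic a)
  obtain ⟨c, hc⟩ := pigeon_infinite (f a) hS'
  refine ⟨(a, {n ∈ S \ Set.Iic a | f a n = c}), ha, ?_, hc, ?_, c, ?_⟩
  · intro m hm; exact hm.1.1
  · intro m hm; exact lt_of_not_ge (fun h => hm.1.2 h)
  · intro m hm; exact hm.2

noncomputable def ramseyChain {k : Type} [Finite k] (f : ℕ → ℕ → k) (S : Set ℕ)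
    (hS : S.Infinite) : ℕ → {T : Set ℕ // T.Infinite}
  | 0 => ⟨S, hS⟩
  | n + 1 =>
      ⟨(ramsey_step f (ramseyChain f S hS n).1 (ramseyChain f S hS n).2).choose.2,
       (ramsey_step f (ramseyChain f S hS n).1 (ramseyChain f S hS n).2).choose_spec.2.2.1⟩

noncomputable def ramseyA {k : Type} [Finite k] (f : ℕ → ℕ → k) (S : Set ℕ)
    (hS : S.Infinite) (n : ℕ) : ℕ :=
  (ramsey_step f (ramseyChain f S hS n).1 (ramseyChain f S hS n).2).choose.1

noncomputable def ramseyC {k : Type} [Finite k] (f : ℕ → ℕ → k) (S : Set ℕ)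
    (hS : S.Infinite) (n : ℕ) : k :=
  (ramsey_step f (ramseyChain f S hS n).1 (ramseyChain f S hS n).2).choose_spec.2.2.2.2.choose

section RamseyFacts

variable {k : Type} [Finite k] (f : ℕ → ℕ → k) (S : Set ℕ) (hS : S.Infinite)

lemma ramseyA_mem (n : ℕ) : ramseyA f S hS n ∈ (ramseyChain f S hS n).1 :=
  (ramsey_step f (ramseyChain f S hS n).1 (ramseyChain f S hS n).2).choose_spec.1

lemma ramseyChain_succ_subset (n : ℕ) :
    (ramseyChain f S hS (n + 1)).1 ⊆ (ramseyChain f S hS n).1 :=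
  (ramsey_step f (ramseyChain f S hS n).1 (ramseyChain f S hS n).2).choose_spec.2.1

lemma ramseyChain_lt (n : ℕ) :
    ∀ m ∈ (ramseyChain f S hS (n + 1)).1, ramseyA f S hS n < m :=
  (ramsey_step f (ramseyChain f S hS n).1 (ramseyChain f S hS n).2).choose_spec.2.2.2.1

lemma ramseyChain_col (n : ℕ) :
    ∀ m ∈ (ramseyChain f S hS (n + 1)).1, f (ramseyA f S hS n) m = ramseyC f S hS n :=
  (ramsey_step f (ramseyChain f S hS n).1 (ramseyChain f S hS n).2).choose_spec.2.2.2.2.choose_spec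

lemma ramseyChain_subset : ∀ {r s : ℕ}, r ≤ s →
    (ramseyChain f S hS s).1 ⊆ (ramseyChain f S hS r).1 := by
  intro r s h
  induction h with
  | refl => exact subset_rfl
  | step h ih => exact fun m hm => ih (ramseyChain_succ_subset f S hS _ hm)

lemma ramseyA_strictMono : StrictMono (ramseyA f S hS) := by
  apply strictMono_nat_of_lt_succ
  intro n
  exact ramseyChain_lt f S hS n _ (ramseyA_mem f S hS (n + 1))

lemma ramseyA_col {n m : ℕ} (h : n < m) :
    f (ramseyA f S hS n) (ramseyA f S hS m) = ramseyC f S hS n :=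
  ramseyChain_col f S hS n _ (ramseyChain_subset f S hS h (ramseyA_mem f S hS m))

end RamseyFacts

/-- Infinite Ramsey theorem for pairs with finitely many colors, relative to an infinite set. -/
theorem ramsey_pairs {k : Type} [Finite k] (f : ℕ → ℕ → k) (S : Set ℕ) (hS : S.Infinite) :
    ∃ T, T ⊆ S ∧ T.Infinite ∧ ∃ c, ∀ i ∈ T, ∀ j ∈ T, i < j → f i j = c := by
  obtain ⟨c₀, hc₀⟩ := pigeon_infinite (ramseyC f S hS) (Set.infinite_univ (α := ℕ))
  refine ⟨ramseyA f S hS '' {n | ramseyC f S hS n = c₀}, ?_, ?_, c₀, ?_⟩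
  · rintro _ ⟨n, -, rfl⟩
    exact ramseyChain_subset f S hS (Nat.zero_le n) (ramseyA_mem f S hS n)
  · have : {n ∈ (Set.univ : Set ℕ) | ramseyC f S hS n = c₀} = {n | ramseyC f S hS n = c₀} := by
      ext n; simp
    rw [this] at hc₀
    exact hc₀.image ((ramseyA_strictMono f S hS).injective.injOn)
  · rintro _ ⟨n, hn, rfl⟩ _ ⟨m, hm, rfl⟩ hlt
    have hnm : n < m := (ramseyA_strictMono f S hS).lt_iff_lt.mp hlt
    rw [ramseyA_col f S hS hnm]
    exact hn


/-- Refinement step: on an infinite set we can find an infinite subset on which all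
pair-distances differ by less than `1/(r+1)`. -/
lemma refine_step (f : ℕ → ℕ → ℝ) (hf0 : ∀ i j, 0 ≤ f i j) (B : ℝ) (hfB : ∀ i j, f i j ≤ B)
    (r : ℕ) (S : Set ℕ) (hS : S.Infinite) :
    ∃ T, T ⊆ S ∧ T.Infinite ∧ ∀ i ∈ T, ∀ j ∈ T, ∀ k ∈ T, ∀ l ∈ T,
      i < j → k < l → |f i j - f k l| < 1 / (r + 1) := by
  set K : ℕ := ⌊B * (r + 1)⌋₊ with hK
  have hfloor : ∀ i j, ⌊f i j * (r + 1)⌋₊ < K + 1 := by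
    intro i j
    have h1 : f i j * (r + 1) ≤ B * (r + 1) := by
      apply mul_le_mul_of_nonneg_right (hfB i j)
      positivity
    exact Nat.lt_succ_of_le (Nat.floor_le_floor h1)
  set g : ℕ → ℕ → Fin (K + 1) := fun i j => ⟨⌊f i j * (r + 1)⌋₊, hfloor i j⟩ with hg
  obtain ⟨T, hTS, hTi, c, hc⟩ := ramsey_pairs g S hS
  refine ⟨T, hTS, hTi, ?_⟩
  intro i hi j hj k hk l hl hij hkl
  have h1 : ⌊f i j * (r + 1)⌋₊ = ⌊f k l * (r + 1)⌋₊ := by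
    have := (hc i hi j hj hij).trans (hc k hk l hl hkl).symm
    exact congrArg Fin.val this
  have hr1 : (0 : ℝ) < r + 1 := by positivity
  have key : |f i j * (r + 1) - f k l * (r + 1)| < 1 := by
    have ha1 : (⌊f i j * (r + 1)⌋₊ : ℝ) ≤ f i j * (r + 1) :=
      Nat.floor_le (mul_nonneg (hf0 _ _) hr1.le)
    have ha2 : f i j * (r + 1) < ⌊f i j * (r + 1)⌋₊ + 1 := Nat.lt_floor_add_one _
    have hb1 : (⌊f k l * (r + 1)⌋₊ : ℝ) ≤ f k l * (r + 1) :=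
      Nat.floor_le (mul_nonneg (hf0 _ _) hr1.le)
    have hb2 : f k l * (r + 1) < ⌊f k l * (r + 1)⌋₊ + 1 := Nat.lt_floor_add_one _
    rw [abs_lt]
    constructor <;> [skip; skip] <;>
    · rw [h1] at * <;> nlinarith [h1]
  have : |f i j - f k l| * (r + 1) < 1 := by
    calc |f i j - f k l| * (r + 1) = |(f i j - f k l) * (r + 1)| := by
          rw [abs_mul, abs_of_pos hr1]
      _ = |f i j * (r + 1) - f k l * (r + 1)| := by ring_nf
      _ < 1 := key
  rw [lt_div_iff₀ hr1]
  exact this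

/-- The nested chain of refined infinite sets. -/
noncomputable def refChain (f : ℕ → ℕ → ℝ) (hf0 : ∀ i j, 0 ≤ f i j) (B : ℝ)
    (hfB : ∀ i j, f i j ≤ B) :
    (n : ℕ) → {T : Set ℕ // T.Infinite ∧ ∀ i ∈ T, ∀ j ∈ T, ∀ k ∈ T, ∀ l ∈ T,
      i < j → k < l → |f i j - f k l| < 1 / (n + 1)}
  | 0 => ⟨(refine_step f hf0 B hfB 0 Set.univ Set.infinite_univ).choose,
      (refine_step f hf0 B hfB 0 Set.univ Set.infinite_univ).choose_spec.2.1,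
      (refine_step f hf0 B hfB 0 Set.univ Set.infinite_univ).choose_spec.2.2⟩
  | n + 1 =>
      ⟨(refine_step f hf0 B hfB (n+1) (refChain f hf0 B hfB n).1
          (refChain f hf0 B hfB n).2.1).choose,
       (refine_step f hf0 B hfB (n+1) (refChain f hf0 B hfB n).1
          (refChain f hf0 B hfB n).2.1).choose_spec.2.1,
       by exact_mod_cast (refine_step f hf0 B hfB (n+1) (refChain f hf0 B hfB n).1
          (refChain f hf0 B hfB n).2.1).choose_spec.2.2⟩

lemma refChain_succ_subset (f : ℕ → ℕ → ℝ) (hf0 : ∀ i j, 0 ≤ f i j) (B : ℝ)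
    (hfB : ∀ i j, f i j ≤ B) (n : ℕ) :
    (refChain f hf0 B hfB (n + 1)).1 ⊆ (refChain f hf0 B hfB n).1 :=
  (refine_step f hf0 B hfB (n+1) (refChain f hf0 B hfB n).1
      (refChain f hf0 B hfB n).2.1).choose_spec.1

lemma refChain_subset (f : ℕ → ℕ → ℝ) (hf0 : ∀ i j, 0 ≤ f i j) (B : ℝ)
    (hfB : ∀ i j, f i j ≤ B) {r s : ℕ} (h : r ≤ s) :
    (refChain f hf0 B hfB s).1 ⊆ (refChain f hf0 B hfB r).1 := by
  induction h with
  | refl => exact subset_rfl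
  | step h ih => exact fun m hm => ih (refChain_succ_subset f hf0 B hfB _ hm)

/-- The diagonal sequence `b`. -/
noncomputable def refDiag (f : ℕ → ℕ → ℝ) (hf0 : ∀ i j, 0 ≤ f i j) (B : ℝ)
    (hfB : ∀ i j, f i j ≤ B) : ℕ → ℕ
  | 0 => ((refChain f hf0 B hfB 0).2.1.exists_gt 0).choose
  | n + 1 => ((refChain f hf0 B hfB (n+1)).2.1.exists_gt
      (refDiag f hf0 B hfB n)).choose

lemma refDiag_mem (f : ℕ → ℕ → ℝ) (hf0 : ∀ i j, 0 ≤ f i j) (B : ℝ)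
    (hfB : ∀ i j, f i j ≤ B) (n : ℕ) :
    refDiag f hf0 B hfB n ∈ (refChain f hf0 B hfB n).1 := by
  cases n with
  | zero => exact ((refChain f hf0 B hfB 0).2.1.exists_gt 0).choose_spec.1
  | succ n => exact ((refChain f hf0 B hfB (n+1)).2.1.exists_gt
      (refDiag f hf0 B hfB n)).choose_spec.1

lemma refDiag_strictMono (f : ℕ → ℕ → ℝ) (hf0 : ∀ i j, 0 ≤ f i j) (B : ℝ)
    (hfB : ∀ i j, f i j ≤ B) : StrictMono (refDiag f hf0 B hfB) := by
  apply strictMono_nat_of_lt_succ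
  intro n
  exact ((refChain f hf0 B hfB (n+1)).2.1.exists_gt (refDiag f hf0 B hfB n)).choose_spec.2

/-- **Ramsey-type lemma.** For every bounded sequence `(x n)` in a Banach space `X`
there is an infinite set `M ⊆ ℕ` such that `‖x i - x j‖` converges as `i, j ∈ M`,
`i, j → ∞` (in the Cauchy sense for the double sequence, with `i < j`, `k < l`). -/
theorem boundedSeq_exists_infinite_convergent_distances
    (X : Type*) [NormedAddCommGroup X] [NormedSpace ℝ X] [CompleteSpace X]
    (x : ℕ → X) (hb : ∃ C : ℝ, ∀ n, ‖x n‖ ≤ C) :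
    ∃ M : Set ℕ, M.Infinite ∧
      ∀ ε : ℝ, 0 < ε → ∃ N : ℕ, ∀ i ∈ M, ∀ j ∈ M, ∀ k ∈ M, ∀ l ∈ M,
        N ≤ i → N ≤ j → N ≤ k → N ≤ l → i < j → k < l →
        |‖x i - x j‖ - ‖x k - x l‖| < ε := by
  obtain ⟨C, hC⟩ := hb
  set f : ℕ → ℕ → ℝ := fun i j => ‖x i - x j‖ with hf
  have hf0 : ∀ i j, 0 ≤ f i j := fun i j => norm_nonneg _
  have hfB : ∀ i j, f i j ≤ 2 * C := by
    intro i j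
    calc ‖x i - x j‖ ≤ ‖x i‖ + ‖x j‖ := norm_sub_le _ _
      _ ≤ 2 * C := by linarith [hC i, hC j]
  set b := refDiag f hf0 (2 * C) hfB with hbdef
  have hmono : StrictMono b := refDiag_strictMono f hf0 (2 * C) hfB
  refine ⟨Set.range b, Set.infinite_range_of_injective hmono.injective, ?_⟩
  intro ε hε
  obtain ⟨r, hr⟩ := exists_nat_one_div_lt hε
  refine ⟨b r, ?_⟩
  rintro _ ⟨s₁, rfl⟩ _ ⟨s₂, rfl⟩ _ ⟨s₃, rfl⟩ _ ⟨s₄, rfl⟩ h1 h2 h3 h4 hij hkl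
  have mem : ∀ s, r ≤ s → b s ∈ (refChain f hf0 (2 * C) hfB r).1 := by
    intro s hs
    exact refChain_subset f hf0 (2 * C) hfB hs (refDiag_mem f hf0 (2 * C) hfB s)
  have le1 : r ≤ s₁ := hmono.le_iff_le.mp h1
  have le2 : r ≤ s₂ := hmono.le_iff_le.mp h2
  have le3 : r ≤ s₃ := hmono.le_iff_le.mp h3
  have le4 : r ≤ s₄ := hmono.le_iff_le.mp h4
  have := (refChain f hf0 (2 * C) hfB r).2.2 _ (mem s₁ le1) _ (mem s₂ le2)
      _ (mem s₃ le3) _ (mem s₄ le4) hij hkl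
  calc |f (b s₁) (b s₂) - f (b s₃) (b s₄)| < 1 / (r + 1) := this
    _ < ε := by exact_mod_cast hr
end

section
/- For every infinite-dimensional Banach space X, one has 2 ≤ K(X) · K(X*), where K denotes the Kottman constant and X* the continuous dual of X. -/
noncomputable section
open Metric Set

/-- The Kottman constant of a normed space. -/
def kottman (X : Type*) [NormedAddCommGroup X] : ℝ :=
  sSup {σ : ℝ | 0 < σ ∧ ∃ x : ℕ → X, (∀ n, ‖x n‖ ≤ 1) ∧
    ∀ n m, n ≠ m → σ ≤ ‖x n - x m‖}

def symKottman (X : Type*) [NormedAddCommGroup X] : ℝ :=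
  sSup {σ : ℝ | 0 < σ ∧ ∃ x : ℕ → X, (∀ n, ‖x n‖ ≤ 1) ∧
    ∀ n m, n ≠ m → σ ≤ ‖x n - x m‖ ∧ σ ≤ ‖x n + x m‖}

def finKottman (X : Type*) [NormedAddCommGroup X] : ℝ :=
  sSup {σ : ℝ | 0 < σ ∧ ∀ N : ℕ, ∃ x : Fin N → X, (∀ n, ‖x n‖ ≤ 1) ∧
    ∀ n m, n ≠ m → σ ≤ ‖x n - x m‖}

/-- The gap between two subsets (typically closed subspaces) of a normed space,
measured between their unit balls. -/
def gap {Z : Type*} [NormedAddCommGroup Z] (M N : Set Z) : ℝ :=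
  max (sSup ((fun x => Metric.infDist x (N ∩ Metric.closedBall 0 1)) '' (M ∩ Metric.closedBall 0 1)))
      (sSup ((fun y => Metric.infDist y (M ∩ Metric.closedBall 0 1)) '' (N ∩ Metric.closedBall 0 1)))

/-- The Kadets distance between two Banach spaces. -/
def kadets (X Y : Type*) [NormedAddCommGroup X] [NormedSpace ℝ X]
    [NormedAddCommGroup Y] [NormedSpace ℝ Y] : ℝ :=
  sInf {d : ℝ | ∃ (W : Type) (nW : NormedAddCommGroup W) (sW : NormedSpace ℝ W)
    (cW : CompleteSpace W) (i : X →ₗᵢ[ℝ] W) (j : Y →ₗᵢ[ℝ] W),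
    d = gap (Set.range i) (Set.range j)}

/-- The isomorphic Kottman constant: infimum of Kottman constants over all
Banach spaces isomorphic to `X`. -/
def ikottman (X : Type) [NormedAddCommGroup X] [NormedSpace ℝ X] : ℝ :=
  sInf {k : ℝ | ∃ (V : Type) (nV : NormedAddCommGroup V) (sV : NormedSpace ℝ V)
    (cV : CompleteSpace V) (e : X ≃L[ℝ] V), k = kottman V}

/-- Whitley's thickness constant. -/
def whitley (X : Type*) [NormedAddCommGroup X] : ℝ :=
  sInf {ε : ℝ | 0 < ε ∧ ∃ F : Finset X, (∀ f ∈ F, ‖f‖ = 1) ∧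
    ∀ x : X, ‖x‖ = 1 → ∃ f ∈ F, ‖x - f‖ ≤ ε}

/-- The James constant. -/
def james (X : Type*) [NormedAddCommGroup X] : ℝ :=
  sSup {t : ℝ | ∃ x y : X, ‖x‖ = 1 ∧ ‖y‖ = 1 ∧ t = min ‖x - y‖ ‖x + y‖}

def gconst (X : Type*) [NormedAddCommGroup X] : ℝ :=
  sInf {t : ℝ | ∃ x y : X, ‖x‖ = 1 ∧ ‖y‖ = 1 ∧ t = max ‖x - y‖ ‖x + y‖}


section Helpers
open NormedSpace Filter

open Filter Set

private lemma ultra_pure {γ : Type} [Finite γ] [Nonempty γ] (U : Ultrafilter ℕ) (f : ℕ → γ) :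
    ∃ k, {i | f i = k} ∈ U := by
  by_contra h
  push_neg at h
  have h2 : ∀ k : γ, {i | f i = k}ᶜ ∈ U := fun k => (Ultrafilter.compl_mem_iff_notMem).2 (h k)
  have h3 : (⋂ k : γ, {i | f i = k}ᶜ) ∈ U := Filter.iInter_mem.2 h2
  have h4 : (⋂ k : γ, {i | f i = k}ᶜ) = ∅ := by
    ext i; simp
  rw [h4] at h3
  exact (Filter.empty_notMem (U : Filter ℕ)) h3

private lemma ramsey_pairs_s1 {γ : Type} [Finite γ] [Nonempty γ] (c : ℕ → ℕ → γ) :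
    ∃ g : ℕ → ℕ, StrictMono g ∧ ∃ k, ∀ i j, i < j → c (g i) (g j) = k := by
  set U : Ultrafilter ℕ := Filter.hyperfilter ℕ with hU
  have hcof : ∀ a : ℕ, {j | a < j} ∈ U := by
    intro a
    apply Filter.hyperfilter_le_cofinite
    have : {j : ℕ | a < j}ᶜ = Set.Iic a := by ext j; simp [Nat.not_lt]
    simp [Filter.mem_cofinite, this, Set.finite_Iic]
  have hti : ∀ i, ∃ k, {j | c i j = k} ∈ U := fun i => ultra_pure U (c i)
  choose t ht using hti
  obtain ⟨k₀, hk₀⟩ := ultra_pure U t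
  -- recursive sets
  let S : ℕ → Set ℕ := fun n => Nat.rec {i | t i = k₀}
    (fun _ Sn => Sn ∩ {j | sInf Sn < j ∧ c (sInf Sn) j = k₀}) n
  have hS0 : S 0 = {i | t i = k₀} := rfl
  have hSsucc : ∀ n, S (n+1) = S n ∩ {j | sInf (S n) < j ∧ c (sInf (S n)) j = k₀} := fun n => rfl
  have hSsub : ∀ n, S n ⊆ {i | t i = k₀} := by
    intro n
    induction n with
    | zero => exact fun x hx => hx
    | succ n ih => rw [hSsucc]; exact fun x hx => ih hx.1
  have hSU : ∀ n, S n ∈ U := by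
    intro n
    induction n with
    | zero => exact hk₀
    | succ n ih =>
      rw [hSsucc]
      have hne : (S n).Nonempty := Ultrafilter.nonempty_of_mem ih
      have hmem : sInf (S n) ∈ S n := Nat.sInf_mem hne
      have htk : t (sInf (S n)) = k₀ := hSsub n hmem
      have h1 : {j | c (sInf (S n)) j = k₀} ∈ U := by
        rw [← htk]; exact ht _
      have : {j | sInf (S n) < j ∧ c (sInf (S n)) j = k₀} ∈ U := by
        have := Filter.inter_mem (hcof (sInf (S n))) h1
        exact this
      exact Filter.inter_mem ih this
  have hmemS : ∀ n, sInf (S n) ∈ S n := fun n => Nat.sInf_mem (Ultrafilter.nonempty_of_mem (hSU n))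
  have hanti : ∀ n m, n ≤ m → S m ⊆ S n := by
    intro n m hnm
    induction m with
    | zero => simp_all
    | succ m ih =>
      rcases Nat.lt_or_ge n (m+1) with h | h
      · have := ih (Nat.lt_succ_iff.1 h)
        rw [hSsucc]; exact fun x hx => this hx.1
      · have : n = m + 1 := le_antisymm hnm h
        subst this; exact fun x hx => hx
  refine ⟨fun n => sInf (S n), ?_, k₀, ?_⟩
  · apply strictMono_nat_of_lt_succ
    intro n
    have := hmemS (n+1)
    rw [hSsucc] at this
    exact this.2.1
  · intro i j hij
    have hj : sInf (S j) ∈ S (i+1) := hanti (i+1) j hij (hmemS j)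
    rw [hSsucc] at hj
    exact hj.2.2
private lemma exists_bin (ε : ℝ) (hε : 0 < ε) :
    ∃ (B : ℕ), 0 < B ∧ ∃ b : ℝ → Fin B, ∀ v w, |v| ≤ 2 → |w| ≤ 2 → b v = b w → |v - w| ≤ ε := by
  refine ⟨⌊(4:ℝ)/ε⌋₊ + 1, Nat.succ_pos _, fun v => ⟨min ⌊(v+2)/ε⌋₊ ⌊(4:ℝ)/ε⌋₊, by omega⟩, ?_⟩
  intro v w hv hw hbw
  have hv2 : -2 ≤ v ∧ v ≤ 2 := abs_le.1 hv
  have hw2 : -2 ≤ w ∧ w ≤ 2 := abs_le.1 hw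
  have hle : ∀ u : ℝ, -2 ≤ u → u ≤ 2 → ⌊(u+2)/ε⌋₊ ≤ ⌊(4:ℝ)/ε⌋₊ := by
    intro u h1 h2
    apply Nat.floor_le_floor
    apply div_le_div_of_nonneg_right (by linarith) hε.le |>.trans_eq rfl
  have hv3 := hle v hv2.1 hv2.2
  have hw3 := hle w hw2.1 hw2.2
  have heq : ⌊(v+2)/ε⌋₊ = ⌊(w+2)/ε⌋₊ := by
    have := Fin.mk.injEq (min ⌊(v+2)/ε⌋₊ ⌊(4:ℝ)/ε⌋₊) _ (min ⌊(w+2)/ε⌋₊ ⌊(4:ℝ)/ε⌋₊) _ ▸ hbw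
    simp only [Fin.mk.injEq, min_eq_left hv3, min_eq_left hw3] at this ⊢
    omega
  -- both (v+2)/ε and (w+2)/ε in [m, m+1)
  have hvn : (0:ℝ) ≤ (v+2)/ε := div_nonneg (by linarith) hε.le
  have hwn : (0:ℝ) ≤ (w+2)/ε := div_nonneg (by linarith) hε.le
  have h1 : ((⌊(v+2)/ε⌋₊ : ℝ)) ≤ (v+2)/ε := Nat.floor_le hvn
  have h2 : (v+2)/ε < ⌊(v+2)/ε⌋₊ + 1 := Nat.lt_floor_add_one _
  have h3 : ((⌊(w+2)/ε⌋₊ : ℝ)) ≤ (w+2)/ε := Nat.floor_le hwn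
  have h4 : (w+2)/ε < ⌊(w+2)/ε⌋₊ + 1 := Nat.lt_floor_add_one _
  rw [heq] at h1 h2
  have : |(v+2)/ε - (w+2)/ε| < 1 := abs_lt.2 ⟨by linarith, by linarith⟩
  have h5 : (v+2)/ε - (w+2)/ε = (v - w)/ε := by ring
  rw [h5, abs_div, abs_of_pos hε] at this
  calc |v - w| = |v-w|/ε * ε := by field_simp
  _ ≤ 1 * ε := by nlinarith [abs_nonneg (v-w)]
  _ = ε := one_mul ε
open NormedSpace

variable {X : Type} [NormedAddCommGroup X] [NormedSpace ℝ X]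

private lemma exists_ker_vec (hX : ¬ FiniteDimensional ℝ X) {n : ℕ} (F : Fin n → StrongDual ℝ X) :
    ∃ v : X, v ≠ 0 ∧ ∀ i, F i v = 0 := by
  by_contra h
  push_neg at h
  -- the linear map into Fin n → ℝ is injective
  let Φ : X →ₗ[ℝ] (Fin n → ℝ) := LinearMap.pi (fun i => (F i : X →ₗ[ℝ] ℝ))
  have hinj : Function.Injective Φ := by
    rw [← LinearMap.ker_eq_bot, LinearMap.ker_eq_bot']
    intro v hv
    by_contra hv0
    obtain ⟨i, hi⟩ := h v hv0
    exact hi (congrFun hv i)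
  exact hX (FiniteDimensional.of_injective Φ hinj)

private lemma exists_next (hX : ¬ FiniteDimensional ℝ X) {n : ℕ} (F : Fin n → StrongDual ℝ X) :
    ∃ vg : X × StrongDual ℝ X, ‖vg.1‖ = 1 ∧ ‖vg.2‖ = 1 ∧ vg.2 vg.1 = 1 ∧ ∀ i, F i vg.1 = 0 := by
  obtain ⟨v₀, hv₀, hker⟩ := exists_ker_vec hX F
  set v : X := (‖v₀‖ : ℝ)⁻¹ • v₀ with hv
  have hvn : ‖v‖ = 1 := norm_smul_inv_norm (𝕜 := ℝ) hv₀
  have hvne : v ≠ 0 := by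
    intro h0; rw [h0, norm_zero] at hvn; norm_num at hvn
  obtain ⟨g, hg1, hg2⟩ := exists_dual_vector ℝ v (norm_ne_zero_iff.2 hvne)
  refine ⟨(v, g), hvn, hg1, ?_, ?_⟩
  · rw [hg2, hvn]; norm_num
  · intro i; rw [hv, map_smul, hker i, smul_eq_mul, mul_zero]

/-- The triangular biorthogonal system. -/
private lemma exists_triangular (hX : ¬ FiniteDimensional ℝ X) :
    ∃ (x : ℕ → X) (f : ℕ → StrongDual ℝ X),
      (∀ n, ‖x n‖ = 1) ∧ (∀ n, ‖f n‖ = 1) ∧ (∀ n, f n (x n) = 1) ∧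
      ∀ n m, n < m → f n (x m) = 0 := by
  -- build history function
  let step : ∀ (n : ℕ), (Fin n → X × StrongDual ℝ X) → X × StrongDual ℝ X := fun n hist =>
    Classical.choose (exists_next hX (fun i => (hist i).2))
  have hstep : ∀ (n : ℕ) (hist : Fin n → X × StrongDual ℝ X),
      ‖(step n hist).1‖ = 1 ∧ ‖(step n hist).2‖ = 1 ∧ (step n hist).2 (step n hist).1 = 1 ∧
      ∀ i, (hist i).2 (step n hist).1 = 0 := fun n hist =>
    Classical.choose_spec (exists_next hX (fun i => (hist i).2))
  let chain : ∀ n, Fin n → X × StrongDual ℝ X := fun n => Nat.rec Fin.elim0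
    (fun m c => Fin.snoc c (step m c)) n
  have hchain_succ : ∀ n, chain (n+1) = Fin.snoc (chain n) (step n (chain n)) := fun n => rfl
  let seq : ℕ → X × StrongDual ℝ X := fun n => step n (chain n)
  have hchain : ∀ n (i : Fin n), chain n i = seq i.1 := by
    intro n
    induction n with
    | zero => exact fun i => i.elim0
    | succ n ih =>
      intro i
      rw [hchain_succ]
      rcases Nat.lt_or_ge i.1 n with h | h
      · have : (i : Fin (n+1)) = Fin.castSucc ⟨i.1, h⟩ := by ext; simp
        rw [this, Fin.snoc_castSucc]
        exact ih ⟨i.1, h⟩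
      · have hin : i.1 = n := by omega
        have : (i : Fin (n+1)) = Fin.last n := by ext; simpa using hin
        rw [this, Fin.snoc_last]
  refine ⟨fun n => (seq n).1, fun n => (seq n).2, fun n => (hstep n (chain n)).1,
    fun n => (hstep n (chain n)).2.1, fun n => (hstep n (chain n)).2.2.1, ?_⟩
  intro n m hnm
  have h := (hstep m (chain m)).2.2.2 ⟨n, hnm⟩
  rwa [hchain m ⟨n, hnm⟩] at h

open NormedSpace

private def KSet (X : Type*) [NormedAddCommGroup X] : Set ℝ :=
  {σ : ℝ | 0 < σ ∧ ∃ x : ℕ → X, (∀ n, ‖x n‖ ≤ 1) ∧ ∀ n m, n ≠ m → σ ≤ ‖x n - x m‖}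

private def kottman' (X : Type*) [NormedAddCommGroup X] : ℝ := sSup (KSet X)

private lemma KSet_bddAbove (X : Type*) [NormedAddCommGroup X] : BddAbove (KSet X) := by
  refine ⟨2, fun σ hσ => ?_⟩
  obtain ⟨-, x, hx, hsep⟩ := hσ
  calc σ ≤ ‖x 0 - x 1‖ := hsep 0 1 (by norm_num)
  _ ≤ ‖x 0‖ + ‖x 1‖ := norm_sub_le _ _
  _ ≤ 2 := by linarith [hx 0, hx 1]

private lemma le_kottman' {X : Type*} [NormedAddCommGroup X] {σ : ℝ} (h : σ ∈ KSet X) :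
    σ ≤ kottman' X := le_csSup (KSet_bddAbove X) h

/-- An almost biorthogonal system with pairing at least `p` and cross terms at most `η`. -/
private def KSys (X : Type) [NormedAddCommGroup X] [NormedSpace ℝ X] (p η : ℝ) : Prop :=
  ∃ (x : ℕ → X) (f : ℕ → StrongDual ℝ X),
    (∀ n, ‖x n‖ ≤ 1) ∧ (∀ n, ‖f n‖ ≤ 1) ∧ (∀ n, p ≤ f n (x n)) ∧
    ∀ n m, n ≠ m → |f n (x m)| ≤ η

private lemma KSys_le_one {X : Type} [NormedAddCommGroup X] [NormedSpace ℝ X] {p η : ℝ}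
    (h : KSys X p η) : p ≤ 1 := by
  obtain ⟨x, f, hx, hf, hp, -⟩ := h
  calc p ≤ f 0 (x 0) := hp 0
  _ ≤ |f 0 (x 0)| := le_abs_self _
  _ = ‖f 0 (x 0)‖ := (Real.norm_eq_abs _).symm
  _ ≤ ‖f 0‖ * ‖x 0‖ := ContinuousLinearMap.le_opNorm _ _
  _ ≤ 1 := by nlinarith [hf 0, hx 0, norm_nonneg (x 0), norm_nonneg (f 0)]

private lemma KSys_mono {X : Type} [NormedAddCommGroup X] [NormedSpace ℝ X] {p η p' η' : ℝ}
    (h : KSys X p η) (hp : p' ≤ p) (hη : η ≤ η') : KSys X p' η' := by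
  obtain ⟨x, f, hx, hf, hpair, hcross⟩ := h
  exact ⟨x, f, hx, hf, fun n => hp.trans (hpair n), fun n m hnm => (hcross n m hnm).trans hη⟩

/-- functional value bounded by norms -/
private lemma val_le {X : Type} [NormedAddCommGroup X] [NormedSpace ℝ X]
    (f : StrongDual ℝ X) (x : X) : f x ≤ ‖f‖ * ‖x‖ := by
  calc f x ≤ |f x| := le_abs_self _
  _ = ‖f x‖ := (Real.norm_eq_abs _).symm
  _ ≤ ‖f‖ * ‖x‖ := ContinuousLinearMap.le_opNorm _ _

private lemma abs_val_le {X : Type} [NormedAddCommGroup X] [NormedSpace ℝ X]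
    (f : StrongDual ℝ X) (x : X) : |f x| ≤ ‖f‖ * ‖x‖ := by
  calc |f x| = ‖f x‖ := (Real.norm_eq_abs _).symm
  _ ≤ ‖f‖ * ‖x‖ := ContinuousLinearMap.le_opNorm _ _

section Step0
variable {X : Type} [NormedAddCommGroup X] [NormedSpace ℝ X]

private lemma step0 (hX : ¬ FiniteDimensional ℝ X) (ε : ℝ) (hε : 0 < ε) :
    KSys X (1/4) (2*ε) ∧ (1:ℝ) ∈ KSet X ∧ (1:ℝ) ∈ KSet (StrongDual ℝ X) := by
  obtain ⟨x, f, hx, hf, hp, htri⟩ := exists_triangular hX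
  obtain ⟨B, hB, b, hb⟩ := exists_bin ε hε
  haveI : Nonempty (Fin B) := ⟨⟨0, hB⟩⟩
  obtain ⟨g, hg, k, hk⟩ := ramsey_pairs_s1 (fun i j => b (f j (x i)))
  set x1 : ℕ → X := fun n => x (g n) with hx1def
  set f1 : ℕ → StrongDual ℝ X := fun n => f (g n) with hf1def
  have hx1 : ∀ n, ‖x1 n‖ ≤ 1 := fun n => (hx _).le
  have hf1 : ∀ n, ‖f1 n‖ ≤ 1 := fun n => (hf _).le
  have hp1 : ∀ n, f1 n (x1 n) = 1 := fun n => hp _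
  have htri1 : ∀ n m, n < m → f1 n (x1 m) = 0 := fun n m h => htri _ _ (hg h)
  have habs1 : ∀ n m, |f1 n (x1 m)| ≤ 1 := by
    intro n m
    calc |f1 n (x1 m)| ≤ ‖f1 n‖ * ‖x1 m‖ := abs_val_le _ _
    _ ≤ 1 := by nlinarith [hf1 n, hx1 m, norm_nonneg (x1 m), norm_nonneg (f1 n)]
  -- stability of cross values
  have hC : ∀ i j i' j', i < j → i' < j' → |f1 j (x1 i) - f1 j' (x1 i')| ≤ ε := by
    intro i j i' j' h h'
    apply hb _ _ ((habs1 j i).trans one_le_two) ((habs1 j' i').trans one_le_two)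
    rw [hk i j h, hk i' j' h']
  -- separations ≥ 1
  have hsepx : ∀ n m, n ≠ m → (1:ℝ) ≤ ‖x1 n - x1 m‖ := by
    have key : ∀ n m, n < m → (1:ℝ) ≤ ‖x1 n - x1 m‖ := by
      intro n m h
      have : f1 n (x1 n - x1 m) = 1 := by rw [map_sub, hp1, htri1 n m h, sub_zero]
      calc (1:ℝ) = f1 n (x1 n - x1 m) := this.symm
      _ ≤ ‖f1 n‖ * ‖x1 n - x1 m‖ := val_le _ _
      _ ≤ ‖x1 n - x1 m‖ := by nlinarith [hf1 n, norm_nonneg (x1 n - x1 m)]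
    intro n m hnm
    rcases Nat.lt_or_ge n m with h | h
    · exact key n m h
    · rw [norm_sub_rev]; exact key m n (by omega)
  have hsepf : ∀ n m, n ≠ m → (1:ℝ) ≤ ‖f1 n - f1 m‖ := by
    have key : ∀ n m, n < m → (1:ℝ) ≤ ‖f1 n - f1 m‖ := by
      intro n m h
      have hv : (f1 m - f1 n) (x1 m) = 1 := by
        rw [ContinuousLinearMap.sub_apply, hp1, htri1 n m h, sub_zero]
      have : (1:ℝ) ≤ ‖f1 m - f1 n‖ := by
        calc (1:ℝ) = (f1 m - f1 n) (x1 m) := hv.symm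
        _ ≤ ‖f1 m - f1 n‖ * ‖x1 m‖ := val_le _ _
        _ ≤ ‖f1 m - f1 n‖ := by nlinarith [hx1 m, norm_nonneg (f1 m - f1 n)]
      rwa [norm_sub_rev] at this
    intro n m hnm
    rcases Nat.lt_or_ge n m with h | h
    · exact key n m h
    · rw [norm_sub_rev]; exact key m n (by omega)
  have hmemx : (1:ℝ) ∈ KSet X := ⟨one_pos, x1, hx1, hsepx⟩
  have hmemf : (1:ℝ) ∈ KSet (StrongDual ℝ X) := ⟨one_pos, f1, hf1, hsepf⟩
  -- the paired system
  set a : ℕ → ℝ := fun j => ‖x1 (2*j) - x1 (2*j+1)‖ with hadef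
  set c : ℕ → ℝ := fun j => ‖f1 (2*j) - f1 (2*j+1)‖ with hcdef
  have ha1 : ∀ j, 1 ≤ a j := fun j => hsepx _ _ (by omega)
  have hc1 : ∀ j, 1 ≤ c j := fun j => hsepf _ _ (by omega)
  have ha2 : ∀ j, a j ≤ 2 := by
    intro j
    calc a j ≤ ‖x1 (2*j)‖ + ‖x1 (2*j+1)‖ := norm_sub_le _ _
    _ ≤ 2 := by linarith [hx1 (2*j), hx1 (2*j+1)]
  have hc2 : ∀ j, c j ≤ 2 := by
    intro j
    calc c j ≤ ‖f1 (2*j)‖ + ‖f1 (2*j+1)‖ := norm_sub_le _ _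
    _ ≤ 2 := by linarith [hf1 (2*j), hf1 (2*j+1)]
  set x2 : ℕ → X := fun j => (a j)⁻¹ • (x1 (2*j) - x1 (2*j+1)) with hx2def
  set f2 : ℕ → StrongDual ℝ X := fun j => (c j)⁻¹ • (f1 (2*j) - f1 (2*j+1)) with hf2def
  have hx2 : ∀ j, ‖x2 j‖ ≤ 1 := by
    intro j
    rw [hx2def]
    simp only [norm_smul, norm_inv, Real.norm_eq_abs, abs_of_pos (lt_of_lt_of_le one_pos (ha1 j))]
    rw [inv_mul_le_iff₀ (lt_of_lt_of_le one_pos (ha1 j)), mul_one]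
  have hf2 : ∀ j, ‖f2 j‖ ≤ 1 := by
    intro j
    rw [hf2def]
    simp only [norm_smul, norm_inv, Real.norm_eq_abs, abs_of_pos (lt_of_lt_of_le one_pos (hc1 j))]
    rw [inv_mul_le_iff₀ (lt_of_lt_of_le one_pos (hc1 j)), mul_one]
  have hval : ∀ jk jl : ℕ, f2 jk (x2 jl) = (c jk)⁻¹ * ((a jl)⁻¹ *
      ((f1 (2*jk)) (x1 (2*jl)) - (f1 (2*jk)) (x1 (2*jl+1))
        - ((f1 (2*jk+1)) (x1 (2*jl)) - (f1 (2*jk+1)) (x1 (2*jl+1))))) := by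
    intro jk jl
    rw [hf2def, hx2def]
    simp only [ContinuousLinearMap.smul_apply, map_smul, ContinuousLinearMap.sub_apply, map_sub,
      smul_eq_mul]
    ring
  refine ⟨⟨x2, f2, hx2, hf2, ?_, ?_⟩, hmemx, hmemf⟩
  · -- pairing ≥ 1/4
    intro j
    rw [hval]
    have h1 : f1 (2*j) (x1 (2*j)) = 1 := hp1 _
    have h2 : f1 (2*j) (x1 (2*j+1)) = 0 := htri1 _ _ (by omega)
    have h3 : f1 (2*j+1) (x1 (2*j+1)) = 1 := hp1 _
    have hCj := habs1 (2*j+1) (2*j)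
    have hinner : 1 ≤ f1 (2*j) (x1 (2*j)) - f1 (2*j) (x1 (2*j+1))
        - (f1 (2*j+1) (x1 (2*j)) - f1 (2*j+1) (x1 (2*j+1))) := by
      rw [h1, h2, h3]
      have := (abs_le.1 hCj).2
      linarith
    have hap : (0:ℝ) < a j := lt_of_lt_of_le one_pos (ha1 j)
    have hcp : (0:ℝ) < c j := lt_of_lt_of_le one_pos (hc1 j)
    have hai : ((2:ℝ))⁻¹ ≤ (a j)⁻¹ := inv_anti₀ hap (ha2 j)
    have hci : ((2:ℝ))⁻¹ ≤ (c j)⁻¹ := inv_anti₀ hcp (hc2 j)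
    have inner : ((2:ℝ))⁻¹ * 1 ≤ (a j)⁻¹ * (f1 (2*j) (x1 (2*j)) - f1 (2*j) (x1 (2*j+1))
        - (f1 (2*j+1) (x1 (2*j)) - f1 (2*j+1) (x1 (2*j+1)))) :=
      mul_le_mul hai hinner one_pos.le (inv_nonneg.2 hap.le)
    have outer := mul_le_mul hci inner (by norm_num) (inv_nonneg.2 hcp.le)
    calc (1:ℝ)/4 = (2:ℝ)⁻¹ * ((2:ℝ)⁻¹ * 1) := by norm_num
    _ ≤ _ := outer
  · -- cross ≤ 2ε
    intro jk jl hne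
    rw [hval, abs_mul, abs_mul]
    have hap : (0:ℝ) < a jl := lt_of_lt_of_le one_pos (ha1 jl)
    have hcp : (0:ℝ) < c jk := lt_of_lt_of_le one_pos (hc1 jk)
    have hai : |(a jl)⁻¹| ≤ 1 := by
      rw [abs_of_pos (inv_pos.2 hap), inv_le_one_iff₀]; right; exact ha1 jl
    have hci : |(c jk)⁻¹| ≤ 1 := by
      rw [abs_of_pos (inv_pos.2 hcp), inv_le_one_iff₀]; right; exact hc1 jk
    have hinner : |(f1 (2*jk)) (x1 (2*jl)) - (f1 (2*jk)) (x1 (2*jl+1))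
        - ((f1 (2*jk+1)) (x1 (2*jl)) - (f1 (2*jk+1)) (x1 (2*jl+1)))| ≤ 2*ε := by
      rcases Nat.lt_or_ge jk jl with h | h
      · -- all four terms vanish
        rw [htri1 (2*jk) (2*jl) (by omega), htri1 (2*jk) (2*jl+1) (by omega),
          htri1 (2*jk+1) (2*jl) (by omega), htri1 (2*jk+1) (2*jl+1) (by omega)]
        simp; positivity
      · have hlt : jl < jk := by omega
        have d1 : |f1 (2*jk) (x1 (2*jl)) - f1 (2*jk) (x1 (2*jl+1))| ≤ ε :=
          hC (2*jl) (2*jk) (2*jl+1) (2*jk) (by omega) (by omega)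
        have d2 : |f1 (2*jk+1) (x1 (2*jl)) - f1 (2*jk+1) (x1 (2*jl+1))| ≤ ε :=
          hC (2*jl) (2*jk+1) (2*jl+1) (2*jk+1) (by omega) (by omega)
        calc _ ≤ |f1 (2*jk) (x1 (2*jl)) - f1 (2*jk) (x1 (2*jl+1))|
            + |f1 (2*jk+1) (x1 (2*jl)) - f1 (2*jk+1) (x1 (2*jl+1))| := abs_sub _ _
        _ ≤ 2*ε := by linarith
    have inner : |(a jl)⁻¹| * |(f1 (2*jk)) (x1 (2*jl)) - (f1 (2*jk)) (x1 (2*jl+1))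
        - ((f1 (2*jk+1)) (x1 (2*jl)) - (f1 (2*jk+1)) (x1 (2*jl+1)))| ≤ 1 * (2*ε) :=
      mul_le_mul hai hinner (abs_nonneg _) zero_le_one
    have outer := mul_le_mul hci inner (by positivity) zero_le_one
    calc |(c jk)⁻¹| * (|(a jl)⁻¹| * |(f1 (2*jk)) (x1 (2*jl)) - (f1 (2*jk)) (x1 (2*jl+1))
        - ((f1 (2*jk+1)) (x1 (2*jl)) - (f1 (2*jk+1)) (x1 (2*jl+1)))|) ≤ 1 * (1 * (2*ε)) := outer
    _ = 2*ε := by ring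

end Step0

section MainStep
variable {X : Type} [NormedAddCommGroup X] [NormedSpace ℝ X]

set_option maxHeartbeats 2000000 in
private lemma main_step (p η ε : ℝ) (hp : 0 < p) (hη0 : 0 ≤ η) (hη : η ≤ p/2)
    (hε : 0 < ε) (hε2 : ε ≤ p/8) (hsys : KSys X p η) :
    KSys X ((2*p - 2*η)/(kottman' X * kottman' (StrongDual ℝ X) + 9*ε)) (16*η/p^2) := by
  obtain ⟨x, f, hx, hf, hpair, hcross⟩ := hsys
  obtain ⟨B, hB, b, hb⟩ := exists_bin ε hε
  haveI : Nonempty (Fin B × Fin B) := ⟨⟨⟨0, hB⟩, ⟨0, hB⟩⟩⟩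
  obtain ⟨g, hg, k, hk⟩ := ramsey_pairs_s1 (fun i j => (b ‖x i - x j‖, b ‖f i - f j‖))
  set x1 : ℕ → X := fun n => x (g n) with hx1def
  set f1 : ℕ → StrongDual ℝ X := fun n => f (g n) with hf1def
  have hx1 : ∀ n, ‖x1 n‖ ≤ 1 := fun n => hx _
  have hf1 : ∀ n, ‖f1 n‖ ≤ 1 := fun n => hf _
  have hp1 : ∀ n, p ≤ f1 n (x1 n) := fun n => hpair _
  have hcross1 : ∀ n m, n ≠ m → |f1 n (x1 m)| ≤ η :=
    fun n m h => hcross _ _ (fun e => h (hg.injective e))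
  -- separations
  have hsepx : ∀ n m, n ≠ m → p - η ≤ ‖x1 n - x1 m‖ := by
    intro n m h
    have h1 : p - η ≤ f1 n (x1 n - x1 m) := by
      rw [map_sub]
      have := (abs_le.1 (hcross1 n m h)).2
      linarith [hp1 n]
    calc p - η ≤ f1 n (x1 n - x1 m) := h1
    _ ≤ ‖f1 n‖ * ‖x1 n - x1 m‖ := val_le _ _
    _ ≤ ‖x1 n - x1 m‖ := by nlinarith [hf1 n, norm_nonneg (x1 n - x1 m)]
  have hsepf : ∀ n m, n ≠ m → p - η ≤ ‖f1 n - f1 m‖ := by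
    intro n m h
    have h1 : p - η ≤ (f1 n - f1 m) (x1 n) := by
      rw [ContinuousLinearMap.sub_apply]
      have := (abs_le.1 (hcross1 m n (Ne.symm h))).2
      linarith [hp1 n]
    calc p - η ≤ (f1 n - f1 m) (x1 n) := h1
    _ ≤ ‖f1 n - f1 m‖ * ‖x1 n‖ := val_le _ _
    _ ≤ ‖f1 n - f1 m‖ := by nlinarith [hx1 n, norm_nonneg (f1 n - f1 m)]
  have hpη : 0 < p - η := by linarith
  -- norm bounds ≤ 2
  have hnx2 : ∀ n m : ℕ, ‖x1 n - x1 m‖ ≤ 2 := by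
    intro n m
    calc ‖x1 n - x1 m‖ ≤ ‖x1 n‖ + ‖x1 m‖ := norm_sub_le _ _
    _ ≤ 2 := by linarith [hx1 n, hx1 m]
  have hnf2 : ∀ n m : ℕ, ‖f1 n - f1 m‖ ≤ 2 := by
    intro n m
    calc ‖f1 n - f1 m‖ ≤ ‖f1 n‖ + ‖f1 m‖ := norm_sub_le _ _
    _ ≤ 2 := by linarith [hf1 n, hf1 m]
  -- bands
  set Dx : ℝ := ‖x1 0 - x1 1‖ with hDxdef
  set Df : ℝ := ‖f1 0 - f1 1‖ with hDfdef
  have habs2 : ∀ n m : ℕ, |‖x1 n - x1 m‖| ≤ 2 := by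
    intro n m; rw [abs_of_nonneg (norm_nonneg _)]; exact hnx2 n m
  have habs2f : ∀ n m : ℕ, |‖f1 n - f1 m‖| ≤ 2 := by
    intro n m; rw [abs_of_nonneg (norm_nonneg _)]; exact hnf2 n m
  have hbandx : ∀ n m, n ≠ m → |‖x1 n - x1 m‖ - Dx| ≤ ε := by
    have key : ∀ n m, n < m → |‖x1 n - x1 m‖ - Dx| ≤ ε := by
      intro n m h
      apply hb _ _ (habs2 n m) (habs2 0 1)
      have e1 := congrArg Prod.fst (hk n m h)
      have e2 := congrArg Prod.fst (hk 0 1 one_pos)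
      exact e1.trans e2.symm
    intro n m h
    rcases Nat.lt_or_ge n m with h' | h'
    · exact key n m h'
    · rw [norm_sub_rev]; exact key m n (by omega)
  have hbandf : ∀ n m, n ≠ m → |‖f1 n - f1 m‖ - Df| ≤ ε := by
    have key : ∀ n m, n < m → |‖f1 n - f1 m‖ - Df| ≤ ε := by
      intro n m h
      apply hb _ _ (habs2f n m) (habs2f 0 1)
      have e1 := congrArg Prod.snd (hk n m h)
      have e2 := congrArg Prod.snd (hk 0 1 one_pos)
      exact e1.trans e2.symm
    intro n m h
    rcases Nat.lt_or_ge n m with h' | h'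
    · exact key n m h'
    · rw [norm_sub_rev]; exact key m n (by omega)
  have hDx1 : p - η ≤ Dx := hsepx 0 1 (by norm_num)
  have hDf1 : p - η ≤ Df := hsepf 0 1 (by norm_num)
  have hDx2 : Dx ≤ 2 := hnx2 0 1
  have hDf2 : Df ≤ 2 := hnf2 0 1
  have hεsmall : ε < p - η := by linarith
  -- Kottman set membership
  have hmemx : (Dx - ε) ∈ KSet X := by
    refine ⟨by linarith, x1, hx1, fun n m h => ?_⟩
    have := (abs_le.1 (hbandx n m h)).1
    linarith
  have hmemf : (Df - ε) ∈ KSet (StrongDual ℝ X) := by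
    refine ⟨by linarith, f1, hf1, fun n m h => ?_⟩
    have := (abs_le.1 (hbandf n m h)).1
    linarith
  have hKx : Dx - ε ≤ kottman' X := le_kottman' hmemx
  have hKf : Df - ε ≤ kottman' (StrongDual ℝ X) := le_kottman' hmemf
  have hprod : (Dx - ε) * (Df - ε) ≤ kottman' X * kottman' (StrongDual ℝ X) :=
    mul_le_mul hKx hKf (by linarith) (le_trans (by linarith) hKx)
  have hden : (Dx + ε) * (Df + ε) ≤ kottman' X * kottman' (StrongDual ℝ X) + 9*ε := by
    have expand : (Dx + ε) * (Df + ε) = (Dx - ε) * (Df - ε) + 2*ε*(Dx + Df) := by ring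
    have h2 : 2*ε*(Dx + Df) ≤ 8*ε := by nlinarith
    linarith
  -- the paired system
  set a : ℕ → ℝ := fun j => ‖x1 (2*j) - x1 (2*j+1)‖ with hadef
  set c : ℕ → ℝ := fun j => ‖f1 (2*j) - f1 (2*j+1)‖ with hcdef
  have ha1 : ∀ j, p - η ≤ a j := fun j => hsepx _ _ (by omega)
  have hc1 : ∀ j, p - η ≤ c j := fun j => hsepf _ _ (by omega)
  have hap : ∀ j, 0 < a j := fun j => lt_of_lt_of_le hpη (ha1 j)
  have hcp : ∀ j, 0 < c j := fun j => lt_of_lt_of_le hpη (hc1 j)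
  have ha2 : ∀ j, a j ≤ Dx + ε := by
    intro j
    have := (abs_le.1 (hbandx (2*j) (2*j+1) (by omega))).2
    linarith
  have hc2 : ∀ j, c j ≤ Df + ε := by
    intro j
    have := (abs_le.1 (hbandf (2*j) (2*j+1) (by omega))).2
    linarith
  set x2 : ℕ → X := fun j => (a j)⁻¹ • (x1 (2*j) - x1 (2*j+1)) with hx2def
  set f2 : ℕ → StrongDual ℝ X := fun j => (c j)⁻¹ • (f1 (2*j) - f1 (2*j+1)) with hf2def
  have hx2 : ∀ j, ‖x2 j‖ ≤ 1 := by
    intro j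
    rw [hx2def]
    simp only [norm_smul, norm_inv, Real.norm_eq_abs, abs_of_pos (hap j)]
    rw [inv_mul_le_iff₀ (hap j), mul_one]
  have hf2 : ∀ j, ‖f2 j‖ ≤ 1 := by
    intro j
    rw [hf2def]
    simp only [norm_smul, norm_inv, Real.norm_eq_abs, abs_of_pos (hcp j)]
    rw [inv_mul_le_iff₀ (hcp j), mul_one]
  have hval : ∀ jk jl : ℕ, f2 jk (x2 jl) = (c jk)⁻¹ * ((a jl)⁻¹ *
      ((f1 (2*jk)) (x1 (2*jl)) - (f1 (2*jk)) (x1 (2*jl+1))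
        - ((f1 (2*jk+1)) (x1 (2*jl)) - (f1 (2*jk+1)) (x1 (2*jl+1))))) := by
    intro jk jl
    rw [hf2def, hx2def]
    simp only [ContinuousLinearMap.smul_apply, map_smul, ContinuousLinearMap.sub_apply, map_sub,
      smul_eq_mul]
    ring
  refine ⟨x2, f2, hx2, hf2, ?_, ?_⟩
  · -- pairing
    intro j
    rw [hval]
    have h2 := (abs_le.1 (hcross1 (2*j) (2*j+1) (by omega))).2
    have h3 := (abs_le.1 (hcross1 (2*j+1) (2*j) (by omega))).2
    have hinner : 2*p - 2*η ≤ f1 (2*j) (x1 (2*j)) - f1 (2*j) (x1 (2*j+1))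
        - (f1 (2*j+1) (x1 (2*j)) - f1 (2*j+1) (x1 (2*j+1))) := by
      have := hp1 (2*j); have := hp1 (2*j+1)
      linarith
    have hnum : 0 ≤ 2*p - 2*η := by linarith
    have hQpos : 0 < kottman' X * kottman' (StrongDual ℝ X) + 9*ε := by
      have h0 : 0 < (Dx - ε) * (Df - ε) := mul_pos (by linarith) (by linarith)
      linarith
    have hacp : 0 < a j * c j := mul_pos (hap j) (hcp j)
    have hd1 : a j * c j ≤ kottman' X * kottman' (StrongDual ℝ X) + 9*ε := by
      have h1 : a j * c j ≤ (Dx + ε) * (Df + ε) :=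
        mul_le_mul (ha2 j) (hc2 j) (hcp j).le (by linarith)
      linarith
    have step1 : (2*p - 2*η)/(kottman' X * kottman' (StrongDual ℝ X) + 9*ε) ≤ (2*p - 2*η)/(a j * c j) := by
      apply div_le_div_of_nonneg_left hnum hacp hd1
    have step2 : (2*p - 2*η)/(a j * c j) ≤ (c j)⁻¹ * ((a j)⁻¹ *
        (f1 (2*j) (x1 (2*j)) - f1 (2*j) (x1 (2*j+1))
          - (f1 (2*j+1) (x1 (2*j)) - f1 (2*j+1) (x1 (2*j+1))))) := by
      rw [div_eq_mul_inv, mul_inv]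
      rw [show (2*p - 2*η) * ((a j)⁻¹ * (c j)⁻¹) = (c j)⁻¹ * ((a j)⁻¹ * (2*p - 2*η)) by ring]
      apply mul_le_mul_of_nonneg_left _ (inv_nonneg.2 (hcp j).le)
      exact mul_le_mul_of_nonneg_left hinner (inv_nonneg.2 (hap j).le)
    linarith
  · -- cross
    intro jk jl hne
    rw [hval, abs_mul, abs_mul]
    have hai : |(a jl)⁻¹| ≤ (p - η)⁻¹ := by
      rw [abs_of_pos (inv_pos.2 (hap jl))]
      exact inv_anti₀ hpη (ha1 jl)
    have hci : |(c jk)⁻¹| ≤ (p - η)⁻¹ := by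
      rw [abs_of_pos (inv_pos.2 (hcp jk))]
      exact inv_anti₀ hpη (hc1 jk)
    have hd : ∀ n m, n ≠ m → |f1 n (x1 m)| ≤ η := hcross1
    have hinner : |(f1 (2*jk)) (x1 (2*jl)) - (f1 (2*jk)) (x1 (2*jl+1))
        - ((f1 (2*jk+1)) (x1 (2*jl)) - (f1 (2*jk+1)) (x1 (2*jl+1)))| ≤ 4*η := by
      have d1 := hd (2*jk) (2*jl) (by omega)
      have d2 := hd (2*jk) (2*jl+1) (by omega)
      have d3 := hd (2*jk+1) (2*jl) (by omega)
      have d4 := hd (2*jk+1) (2*jl+1) (by omega)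
      have e1 := abs_le.1 d1; have e2 := abs_le.1 d2
      have e3 := abs_le.1 d3; have e4 := abs_le.1 d4
      rw [abs_le]
      constructor <;> [skip; skip] <;> obtain ⟨_,_⟩ := e1 <;> nlinarith [e2.1, e2.2, e3.1, e3.2, e4.1, e4.2]
    have inner2 : |(a jl)⁻¹| * |(f1 (2*jk)) (x1 (2*jl)) - (f1 (2*jk)) (x1 (2*jl+1))
        - ((f1 (2*jk+1)) (x1 (2*jl)) - (f1 (2*jk+1)) (x1 (2*jl+1)))| ≤ (p - η)⁻¹ * (4*η) :=
      mul_le_mul hai hinner (abs_nonneg _) (inv_nonneg.2 hpη.le)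
    have outer : |(c jk)⁻¹| * (|(a jl)⁻¹| * |(f1 (2*jk)) (x1 (2*jl)) - (f1 (2*jk)) (x1 (2*jl+1))
        - ((f1 (2*jk+1)) (x1 (2*jl)) - (f1 (2*jk+1)) (x1 (2*jl+1)))|)
        ≤ (p - η)⁻¹ * ((p - η)⁻¹ * (4*η)) :=
      mul_le_mul hci inner2 (by positivity) (inv_nonneg.2 hpη.le)
    have final : (p - η)⁻¹ * ((p - η)⁻¹ * (4*η)) ≤ 16*η/p^2 := by
      rw [show (p - η)⁻¹ * ((p - η)⁻¹ * (4*η)) = (4*η)/((p-η)*(p-η)) by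
        field_simp]
      rw [div_le_div_iff₀ (mul_pos hpη hpη) (by positivity)]
      nlinarith [mul_nonneg hη0 (mul_nonneg (show (0:ℝ) ≤ p/2 - η by linarith)
        (show (0:ℝ) ≤ 3*p/2 - η by linarith))]
    linarith
end MainStep

private lemma kottman_eq_kottman' (X : Type) [NormedAddCommGroup X] : kottman X = kottman' X := rfl


end Helpers

set_option maxHeartbeats 2000000 in
/-- For every infinite-dimensional Banach space, `2 ≤ K(X) * K(X*)`. -/
theorem two_le_kottman_mul_kottman_dual
    (X : Type) [NormedAddCommGroup X] [NormedSpace ℝ X] [CompleteSpace X]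
    (hX : ¬ FiniteDimensional ℝ X) :
    2 ≤ kottman X * kottman (StrongDual ℝ X) := by
  rw [kottman_eq_kottman', kottman_eq_kottman']
  by_contra hcon
  push_neg at hcon
  set Q : ℝ := kottman' X * kottman' (StrongDual ℝ X) with hQdef
  -- Q ≥ 1 from the triangular system
  obtain ⟨-, hm1, hm2⟩ := step0 hX 1 one_pos
  have h1x : (1:ℝ) ≤ kottman' X := le_kottman' hm1
  have h1f : (1:ℝ) ≤ kottman' (StrongDual ℝ X) := le_kottman' hm2
  have hQ1 : (1:ℝ) ≤ Q := by
    have := mul_le_mul h1x h1f zero_le_one (zero_le_one.trans h1x)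
    simpa using this
  set δ : ℝ := 2 - Q with hδdef
  have hδ : 0 < δ := by simp only [hδdef]; linarith
  have hδ1 : δ ≤ 1 := by simp only [hδdef]; linarith
  set θ : ℝ := 1 + δ/8 with hθdef
  have hθ : 1 < θ := by simp only [hθdef]; linarith
  obtain ⟨N, hN⟩ := pow_unbounded_of_one_lt (9:ℝ) hθ
  have h1296 : (0:ℝ) < 1296 ^ N := by positivity
  set ε₀ : ℝ := (δ/144)/1296^N with hε₀def
  have hε₀ : 0 < ε₀ := by positivity
  have hε₀N : ε₀ * 1296^N = δ/144 := div_mul_cancel₀ _ (ne_of_gt h1296)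
  set εs : ℝ := min (1/72 : ℝ) (δ/18) with hεsdef
  have hεs : 0 < εs := lt_min (by norm_num) (by positivity)
  have hεs1 : εs ≤ 1/72 := min_le_left _ _
  have hεs2 : εs ≤ δ/18 := min_le_right _ _
  have IND : ∀ n, n ≤ N → KSys X ((1/9) * θ^n) (ε₀ * 1296^n) := by
    intro n
    induction n with
    | zero =>
      intro _
      obtain ⟨hsys0, -, -⟩ := step0 hX (ε₀/2) (by positivity)
      refine KSys_mono hsys0 ?_ ?_
      · rw [pow_zero, mul_one]; norm_num
      · rw [pow_zero, mul_one]; linarith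
    | succ n ih =>
      intro hn
      have hsn := ih (by omega)
      have hθpos : (0:ℝ) < θ := by linarith
      have hθn1 : (1:ℝ) ≤ θ^n := one_le_pow₀ hθ.le
      have hθnpos : (0:ℝ) < θ^n := by positivity
      have hpn9 : (1:ℝ)/9 ≤ (1/9) * θ^n := by nlinarith
      have hpnpos : (0:ℝ) < (1/9) * θ^n := by positivity
      have hpow : (1296:ℝ)^n ≤ 1296^N := pow_le_pow_right₀ (by norm_num) (by omega)
      have hηn : ε₀ * 1296^n ≤ δ/144 := by
        rw [← hε₀N]
        exact mul_le_mul_of_nonneg_left hpow hε₀.le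
      have hηn0 : (0:ℝ) ≤ ε₀ * 1296^n := by positivity
      have hηle : ε₀ * 1296^n ≤ ((1/9) * θ^n)/2 := by
        calc ε₀ * 1296^n ≤ δ/144 := hηn
        _ ≤ 1/144 := by linarith
        _ ≤ (1/9)/2 := by norm_num
        _ ≤ ((1/9) * θ^n)/2 := by linarith
      have hεsp : εs ≤ ((1/9) * θ^n)/8 := by
        calc εs ≤ 1/72 := hεs1
        _ = (1/9)/8 := by norm_num
        _ ≤ ((1/9) * θ^n)/8 := by linarith
      have h2 := main_step ((1/9) * θ^n) (ε₀ * 1296^n) εs hpnpos hηn0 hηle hεs hεsp hsn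
      have hQs : Q + 9*εs ≤ 2 - δ/2 := by
        have : 9*εs ≤ δ/2 := by linarith
        simp only [hδdef] at this ⊢
        linarith
      have hQspos : (0:ℝ) < Q + 9*εs := by linarith
      refine KSys_mono h2 ?_ ?_
      · -- (1/9) * θ^(n+1) ≤ (2*p - 2*η)/(Q + 9*εs)
        rw [le_div_iff₀ hQspos]
        have e : (1/9)*θ^(n+1)*(Q+9*εs) = ((1/9)*θ^n)*(θ*(Q+9*εs)) := by
          rw [pow_succ]; ring
        have b1 : θ*(Q+9*εs) ≤ θ*(2-δ/2) := mul_le_mul_of_nonneg_left hQs hθpos.le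
        have b2 : θ*(2-δ/2) ≤ 2 - δ/4 := by
          simp only [hθdef]
          nlinarith [sq_nonneg δ]
        have b3 : θ*(Q+9*εs) ≤ 2 - δ/4 := b1.trans b2
        have b4 : ((1/9)*θ^n)*(θ*(Q+9*εs)) ≤ ((1/9)*θ^n)*(2 - δ/4) :=
          mul_le_mul_of_nonneg_left b3 hpnpos.le
        have b5 : ((1/9)*θ^n)*(2 - δ/4) ≤ 2*((1/9)*θ^n) - 2*(ε₀ * 1296^n) := by
          have hd : δ/144 ≤ ((1/9)*θ^n) * δ/8 := by
            have : (1/9:ℝ)*δ ≤ ((1/9)*θ^n)*δ :=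
              mul_le_mul_of_nonneg_right (by linarith) hδ.le
            linarith
          nlinarith [hηn]
        linarith [e ▸ (b4.trans b5)]
      · -- 16*η/p^2 ≤ ε₀ * 1296^(n+1)
        rw [div_le_iff₀ (by positivity)]
        have hpsq : (1:ℝ)/81 ≤ ((1/9) * θ^n)^2 := by nlinarith
        have e : ε₀ * 1296^(n+1) = (ε₀ * 1296^n) * 1296 := by rw [pow_succ]; ring
        rw [e]
        nlinarith [hηn0, hpsq]
  have hend := IND N le_rfl
  have hle1 := KSys_le_one hend
  nlinarith
end
end

section
/- Let M and N be closed subspaces of a Banach space Z. Then |K(M) − K(N)| ≤ 2·g(M,N), where g(M,N) = max{ sup_{x ∈ B_M} dist(x, B_N), sup_{y ∈ B_N} dist(y, B_M) } is the gap between M and N, and K denotes the Kottman constant. -/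
noncomputable section
open Metric Set

lemma kottman_nonneg (X : Type*) [NormedAddCommGroup X] : 0 ≤ kottman X :=
  Real.sSup_nonneg fun _ hσ => hσ.1.le

lemma kottman_bddAbove (X : Type*) [NormedAddCommGroup X] :
    BddAbove {σ : ℝ | 0 < σ ∧ ∃ x : ℕ → X, (∀ n, ‖x n‖ ≤ 1) ∧
      ∀ n m, n ≠ m → σ ≤ ‖x n - x m‖} := by
  refine ⟨2, ?_⟩
  rintro σ ⟨hσ, x, hx1, hsep⟩
  calc σ ≤ ‖x 0 - x 1‖ := hsep 0 1 (by norm_num)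
    _ ≤ ‖x 0‖ + ‖x 1‖ := norm_sub_le _ _
    _ ≤ 2 := by linarith [hx1 0, hx1 1]

lemma gap_nonneg {Z : Type*} [NormedAddCommGroup Z] (M N : Set Z) : 0 ≤ gap M N := by
  refine le_trans (Real.sSup_nonneg ?_) (le_max_left _ _)
  rintro r ⟨x, _, rfl⟩
  exact Metric.infDist_nonneg

lemma gap_comm {Z : Type*} [NormedAddCommGroup Z] (M N : Set Z) : gap M N = gap N M :=
  max_comm _ _

lemma kottman_le_kottman_add
    (Z : Type) [NormedAddCommGroup Z] [NormedSpace ℝ Z]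
    (M N : Submodule ℝ Z) :
    kottman M ≤ kottman N + 2 * gap (M : Set Z) (N : Set Z) := by
  set g := gap (M : Set Z) (N : Set Z) with hg
  have hg0 : 0 ≤ g := gap_nonneg _ _
  have hKN0 : 0 ≤ kottman N := kottman_nonneg N
  apply Real.sSup_le _ (by linarith)
  rintro σ ⟨hσ, x, hx1, hsep⟩
  have h0N : (0 : Z) ∈ (N : Set Z) ∩ Metric.closedBall 0 1 :=
    ⟨N.zero_mem, by simp⟩
  have hNne : ((N : Set Z) ∩ Metric.closedBall 0 1).Nonempty := ⟨0, h0N⟩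
  -- each x n is within g of the ball of N
  have hdist : ∀ n, Metric.infDist (x n : Z) ((N : Set Z) ∩ Metric.closedBall 0 1) ≤ g := by
    intro n
    have hmem : (x n : Z) ∈ (M : Set Z) ∩ Metric.closedBall 0 1 :=
      ⟨(x n).2, by simpa [mem_closedBall_zero_iff] using hx1 n⟩
    have hbdd : BddAbove ((fun x => Metric.infDist x ((N : Set Z) ∩ Metric.closedBall 0 1)) ''
        ((M : Set Z) ∩ Metric.closedBall 0 1)) := by
      refine ⟨1, ?_⟩
      rintro r ⟨z, ⟨_, hzB⟩, rfl⟩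
      calc Metric.infDist z ((N : Set Z) ∩ Metric.closedBall 0 1)
          ≤ dist z 0 := Metric.infDist_le_dist_of_mem h0N
        _ ≤ 1 := mem_closedBall.mp hzB
    exact le_trans (le_csSup hbdd ⟨(x n : Z), hmem, rfl⟩) (le_max_left _ _)
  -- it suffices to show σ ≤ K(N) + 2g + δ for all δ > 0
  refine le_of_forall_pos_le_add ?_
  intro δ hδ
  set ε := δ / 2 with hε
  have hεpos : 0 < ε := by positivity
  have hlt : ∀ n, Metric.infDist (x n : Z) ((N : Set Z) ∩ Metric.closedBall 0 1) < g + ε :=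
    fun n => lt_of_le_of_lt (hdist n) (by linarith)
  have hchoice : ∀ n, ∃ y ∈ (N : Set Z) ∩ Metric.closedBall 0 1,
      dist (x n : Z) y < g + ε := fun n => (Metric.infDist_lt_iff hNne).mp (hlt n)
  choose y hy hyd using hchoice
  set z : ℕ → N := fun n => ⟨y n, (hy n).1⟩ with hz
  have hz1 : ∀ n, ‖z n‖ ≤ 1 := by
    intro n
    have := (hy n).2
    simpa [mem_closedBall_zero_iff] using this
  have hzsep : ∀ n m, n ≠ m → σ - 2 * (g + ε) ≤ ‖z n - z m‖ := by
    intro n m hnm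
    have h1 : σ ≤ ‖(x n : Z) - (x m : Z)‖ := by
      have := hsep n m hnm
      simpa using this
    have h2 : ‖(x n : Z) - (x m : Z)‖ ≤ ‖(x n : Z) - y n‖ + ‖y n - y m‖ + ‖y m - (x m : Z)‖ := by
      have := norm_add₃_le (a := (x n : Z) - y n) (b := y n - y m) (c := y m - (x m : Z))
      simpa using (le_trans (le_of_eq (by abel_nf)) this)
    have h3 : ‖(x n : Z) - y n‖ < g + ε := by
      simpa [dist_eq_norm] using hyd n
    have h4 : ‖y m - (x m : Z)‖ < g + ε := by
      have := hyd m
      rw [dist_comm] at this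
      simpa [dist_eq_norm] using this
    have h5 : ‖z n - z m‖ = ‖y n - y m‖ := by
      simp [hz, AddSubgroupClass.coe_norm]
    linarith [h5 ▸ (le_refl ‖z n - z m‖), h5.symm ▸ (le_refl ‖y n - y m‖),
      h5.ge, h5.le]
  by_cases hτ : 0 < σ - 2 * (g + ε)
  · have hmem : σ - 2 * (g + ε) ∈ {σ : ℝ | 0 < σ ∧ ∃ x : ℕ → N, (∀ n, ‖x n‖ ≤ 1) ∧
        ∀ n m, n ≠ m → σ ≤ ‖x n - x m‖} := ⟨hτ, z, hz1, hzsep⟩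
    have := le_csSup (kottman_bddAbove N) hmem
    have : σ - 2 * (g + ε) ≤ kottman N := this
    linarith
  · push_neg at hτ
    linarith

/-- For closed subspaces `M, N` of a Banach space `Z`, `|K(M) - K(N)| ≤ 2 g(M,N)`. -/
theorem abs_kottman_sub_kottman_le_two_mul_gap
    (Z : Type) [NormedAddCommGroup Z] [NormedSpace ℝ Z] [CompleteSpace Z]
    (M N : Submodule ℝ Z) (hM : IsClosed (M : Set Z)) (hN : IsClosed (N : Set Z)) :
    |kottman M - kottman N| ≤ 2 * gap (M : Set Z) (N : Set Z) := by
  rw [abs_sub_le_iff]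
  constructor
  · linarith [kottman_le_kottman_add Z M N]
  · have := kottman_le_kottman_add Z N M
    rw [gap_comm (N : Set Z) (M : Set Z)] at this
    linarith
end
end

section
/- Let X = (⊕_{n∈ℕ} ℓ₁ⁿ)_{c₀} with its standard discrete Köthe lattice structure, and let X** = (⊕_{n∈ℕ} ℓ₁ⁿ)_{ℓ_∞}. Then the map T : ℓ₁ → X** defined by T((ξ_k)_{k}) = (ξ₁, (ξ₁, ξ₂), (ξ₁, ξ₂, ξ₃), …) is an isometric lattice embedding; consequently K^⊥(X**) = 2 while K^⊥(X) = 1. -/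
noncomputable section
open Set ENNReal

/-- `X** = (⊕_n ℓ₁ⁿ)_{ℓ_∞}`. -/
abbrev SumLinfty : Type := lp (fun n : ℕ => PiLp 1 (fun _ : Fin n => ℝ)) ⊤

/-- The `c₀`-sum `X = (⊕_n ℓ₁ⁿ)_{c₀}`, as a subset of `X**`. -/
def sumC0 : Set SumLinfty :=
  {v | Filter.Tendsto (fun n => ‖(v : ∀ n, PiLp 1 (fun _ : Fin n => ℝ)) n‖)
        Filter.atTop (nhds 0)}

/-- The disjoint Kottman constant of a subset `S` of `(⊕_n ℓ₁ⁿ)_{ℓ_∞}`: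
the supremum of separation constants of sequences of pairwise disjointly
supported elements of the unit ball lying in `S`. -/
def disjKottmanSum (S : Set SumLinfty) : ℝ :=
  sSup {σ : ℝ | 0 < σ ∧ ∃ x : ℕ → SumLinfty,
    (∀ n, x n ∈ S ∧ ‖x n‖ ≤ 1) ∧
    (∀ n m, n ≠ m → ∀ (k : ℕ) (j : Fin k),
      (x n : ∀ i, PiLp 1 (fun _ : Fin i => ℝ)) k j = 0 ∨
      (x m : ∀ i, PiLp 1 (fun _ : Fin i => ℝ)) k j = 0) ∧
    ∀ n m, n ≠ m → σ ≤ ‖x n - x m‖}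

/-! ### Auxiliary lemmas -/

lemma block_norm {n : ℕ} (v : PiLp 1 (fun _ : Fin n => ℝ)) :
    ‖v‖ = ∑ j, |v j| := by
  rw [PiLp.norm_eq_sum (by norm_num : 0 < (1:ℝ≥0∞).toReal)]
  simp [Real.norm_eq_abs]

lemma l1_norm (ξ : lp (fun _ : ℕ => ℝ) 1) : ‖ξ‖ = ∑' i, |(ξ : ℕ → ℝ) i| := by
  rw [lp.norm_eq_tsum_rpow (by norm_num) ξ]
  simp [Real.norm_eq_abs]

lemma l1_summable (ξ : lp (fun _ : ℕ => ℝ) 1) : Summable fun i => |(ξ : ℕ → ℝ) i| := by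
  have := (lp.memℓp ξ).summable (by norm_num : 0 < (1:ℝ≥0∞).toReal)
  simpa [Real.norm_eq_abs] using this

/-! ### The isometric lattice embedding `T` -/

def Tfun (ξ : lp (fun _ : ℕ => ℝ) 1) : ∀ n, PiLp 1 (fun _ : Fin n => ℝ) :=
  fun _ => WithLp.toLp 1 (fun j => (ξ : ℕ → ℝ) (j : ℕ))

lemma Tfun_norm (ξ : lp (fun _ : ℕ => ℝ) 1) (n : ℕ) :
    ‖Tfun ξ n‖ = ∑ i ∈ Finset.range n, |(ξ : ℕ → ℝ) i| := by
  rw [block_norm]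
  exact Fin.sum_univ_eq_sum_range (fun i => |(ξ : ℕ → ℝ) i|) n

lemma Tfun_norm_le (ξ : lp (fun _ : ℕ => ℝ) 1) (n : ℕ) : ‖Tfun ξ n‖ ≤ ‖ξ‖ := by
  rw [Tfun_norm, l1_norm]
  exact Summable.sum_le_tsum _ (fun i _ => abs_nonneg _) (l1_summable ξ)

lemma Tfun_mem (ξ : lp (fun _ : ℕ => ℝ) 1) : Memℓp (Tfun ξ) ⊤ :=
  memℓp_infty ⟨‖ξ‖, by rintro - ⟨n, rfl⟩; exact Tfun_norm_le ξ n⟩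

def Tmap : lp (fun _ : ℕ => ℝ) 1 →ₗ[ℝ] SumLinfty where
  toFun ξ := ⟨Tfun ξ, Tfun_mem ξ⟩
  map_add' ξ ζ := by
    apply lp.ext
    funext n
    apply PiLp.ext; intro j
    simp [Tfun, lp.coeFn_add, Pi.add_apply, PiLp.add_apply]
    rfl
  map_smul' c ξ := by
    apply lp.ext
    funext n
    apply PiLp.ext; intro j
    simp [Tfun, lp.coeFn_smul, Pi.smul_apply, PiLp.smul_apply]

lemma Tmap_apply (ξ : lp (fun _ : ℕ => ℝ) 1) (n : ℕ) (j : Fin n) :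
    (Tmap ξ : ∀ i, PiLp 1 (fun _ : Fin i => ℝ)) n j = (ξ : ℕ → ℝ) (j : ℕ) := rfl

lemma Tmap_norm (ξ : lp (fun _ : ℕ => ℝ) 1) : ‖Tmap ξ‖ = ‖ξ‖ := by
  apply le_antisymm
  · exact lp.norm_le_of_forall_le (norm_nonneg ξ) (fun n => Tfun_norm_le ξ n)
  · rw [l1_norm]
    apply Real.tsum_le_of_sum_range_le (fun i => abs_nonneg _)
    intro n
    rw [← Tfun_norm]
    exact lp.norm_apply_le_norm ENNReal.top_ne_zero (Tmap ξ) n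

/-! ### The family witnessing `K^⊥(X**) = 2` -/

def gfun (n : ℕ) : ∀ k, PiLp 1 (fun _ : Fin k => ℝ) :=
  fun _ => WithLp.toLp 1 (fun j => if (j : ℕ) = n then 1 else 0)

lemma gfun_norm (n k : ℕ) : ‖gfun n k‖ = if n < k then 1 else 0 := by
  rw [block_norm]
  split_ifs with h
  · rw [Finset.sum_eq_single (⟨n, h⟩ : Fin k)]
    · simp [gfun]
    · intro b _ hb
      have : (b : ℕ) ≠ n := fun hc => hb (Fin.ext hc)
      simp [gfun, this]
    · simp
  · apply Finset.sum_eq_zero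
    intro j _
    have : (j : ℕ) ≠ n := by omega
    simp [gfun, this]

lemma gfun_mem (n : ℕ) : Memℓp (gfun n) ⊤ :=
  memℓp_infty ⟨1, by rintro - ⟨k, rfl⟩; simp only []; rw [gfun_norm]; split_ifs <;> norm_num⟩

def gelt (n : ℕ) : SumLinfty := ⟨gfun n, gfun_mem n⟩

lemma gelt_norm_le (n : ℕ) : ‖gelt n‖ ≤ 1 :=
  lp.norm_le_of_forall_le zero_le_one fun k => by
    rw [show (gelt n : ∀ i, PiLp 1 (fun _ : Fin i => ℝ)) k = gfun n k from rfl, gfun_norm]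
    split_ifs <;> norm_num

lemma gelt_sep {n m : ℕ} (h : n ≠ m) : (2:ℝ) ≤ ‖gelt n - gelt m‖ := by
  set k := max n m + 1 with hk
  have hn : n < k := by omega
  have hm : m < k := by omega
  have hne : (⟨n, hn⟩ : Fin k) ≠ ⟨m, hm⟩ := fun hc => h (Fin.mk.inj_iff.mp hc)
  have key : (2:ℝ) ≤ ‖(gelt n - gelt m : SumLinfty) k‖ := by
    rw [show ((gelt n - gelt m : SumLinfty) : ∀ i, PiLp 1 (fun _ : Fin i => ℝ)) k
        = gfun n k - gfun m k from rfl, block_norm]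
    have hsub : ({⟨n, hn⟩, ⟨m, hm⟩} : Finset (Fin k)) ⊆ Finset.univ := by simp
    have : ∑ j ∈ ({⟨n, hn⟩, ⟨m, hm⟩} : Finset (Fin k)),
        |(gfun n k - gfun m k) j| = 2 := by
      rw [Finset.sum_pair hne]
      have h1 : |(gfun n k - gfun m k) ⟨n, hn⟩| = 1 := by
        simp [gfun, PiLp.sub_apply, h, Ne.symm h]
      have h2 : |(gfun n k - gfun m k) ⟨m, hm⟩| = 1 := by
        simp [gfun, PiLp.sub_apply, h, Ne.symm h]
      rw [h1, h2]; norm_num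
    calc (2:ℝ) = ∑ j ∈ ({⟨n, hn⟩, ⟨m, hm⟩} : Finset (Fin k)),
        |(gfun n k - gfun m k) j| := this.symm
      _ ≤ ∑ j, |(gfun n k - gfun m k) j| :=
        Finset.sum_le_sum_of_subset_of_nonneg hsub (fun j _ _ => abs_nonneg _)
  exact key.trans (lp.norm_apply_le_norm ENNReal.top_ne_zero _ k)

lemma gelt_disj {n m : ℕ} (h : n ≠ m) (k : ℕ) (j : Fin k) :
    (gelt n : ∀ i, PiLp 1 (fun _ : Fin i => ℝ)) k j = 0 ∨
    (gelt m : ∀ i, PiLp 1 (fun _ : Fin i => ℝ)) k j = 0 := by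
  by_cases hj : (j : ℕ) = n
  · right
    have : (j : ℕ) ≠ m := by omega
    simp [gelt, gfun, this]
  · left; simp [gelt, gfun, hj]

/-! ### The family witnessing `K^⊥(X) ≥ 1` -/

def hfun (n : ℕ) : ∀ k, PiLp 1 (fun _ : Fin k => ℝ) :=
  fun k => WithLp.toLp 1 (fun j => if k = n + 1 ∧ (j : ℕ) = 0 then 1 else 0)

lemma hfun_norm (n k : ℕ) : ‖hfun n k‖ = if k = n + 1 then 1 else 0 := by
  rw [block_norm]
  split_ifs with h
  · subst h
    rw [Fin.sum_univ_succ]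
    simp [hfun]
  · apply Finset.sum_eq_zero
    intro j _
    simp [hfun, h]

lemma hfun_mem (n : ℕ) : Memℓp (hfun n) ⊤ :=
  memℓp_infty ⟨1, by rintro - ⟨k, rfl⟩; simp only []; rw [hfun_norm]; split_ifs <;> norm_num⟩

def helt (n : ℕ) : SumLinfty := ⟨hfun n, hfun_mem n⟩

lemma helt_norm_le (n : ℕ) : ‖helt n‖ ≤ 1 :=
  lp.norm_le_of_forall_le zero_le_one fun k => by
    rw [show (helt n : ∀ i, PiLp 1 (fun _ : Fin i => ℝ)) k = hfun n k from rfl, hfun_norm]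
    split_ifs <;> norm_num

lemma helt_memC0 (n : ℕ) : helt n ∈ sumC0 := by
  have hev : (fun _ : ℕ => (0:ℝ)) =ᶠ[Filter.atTop]
      fun k => ‖(helt n : ∀ i, PiLp 1 (fun _ : Fin i => ℝ)) k‖ := by
    rw [Filter.eventuallyEq_iff_exists_mem]
    refine ⟨{k | n + 2 ≤ k}, Filter.mem_atTop _, fun k hk => ?_⟩
    have : k ≠ n + 1 := by simp at hk; omega
    simp only []; rw [show (helt n : ∀ i, PiLp 1 (fun _ : Fin i => ℝ)) k = hfun n k from rfl,
      hfun_norm]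
    simp [this]
  exact tendsto_const_nhds.congr' hev

lemma helt_sep {n m : ℕ} (h : n ≠ m) : (1:ℝ) ≤ ‖helt n - helt m‖ := by
  have key : (1:ℝ) ≤ ‖(helt n - helt m : SumLinfty) (n+1)‖ := by
    rw [show ((helt n - helt m : SumLinfty) : ∀ i, PiLp 1 (fun _ : Fin i => ℝ)) (n+1)
        = hfun n (n+1) - hfun m (n+1) from rfl, block_norm]
    have hm1 : n + 1 ≠ m + 1 := by omega
    rw [Fin.sum_univ_succ]
    have h0 : |(hfun n (n+1) - hfun m (n+1)) 0| = 1 := by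
      simp [hfun, PiLp.sub_apply, hm1, h]
    rw [h0]
    have : (0:ℝ) ≤ ∑ j : Fin n, |(hfun n (n+1) - hfun m (n+1)) j.succ| :=
      Finset.sum_nonneg fun j _ => abs_nonneg _
    linarith
  exact key.trans (lp.norm_apply_le_norm ENNReal.top_ne_zero _ (n+1))

lemma helt_disj {n m : ℕ} (h : n ≠ m) (k : ℕ) (j : Fin k) :
    (helt n : ∀ i, PiLp 1 (fun _ : Fin i => ℝ)) k j = 0 ∨
    (helt m : ∀ i, PiLp 1 (fun _ : Fin i => ℝ)) k j = 0 := by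
  by_cases hk : k = n + 1
  · right
    have : k ≠ m + 1 := by omega
    simp [helt, hfun, this]
  · left; simp [helt, hfun, hk]

/-! ### Upper bound `K^⊥(X) ≤ 1` -/

lemma sumC0_upper {σ : ℝ} (x : ℕ → SumLinfty)
    (hmem : ∀ n, x n ∈ sumC0 ∧ ‖x n‖ ≤ 1)
    (hdisj : ∀ n m, n ≠ m → ∀ (k : ℕ) (j : Fin k),
      (x n : ∀ i, PiLp 1 (fun _ : Fin i => ℝ)) k j = 0 ∨
      (x m : ∀ i, PiLp 1 (fun _ : Fin i => ℝ)) k j = 0)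
    (hsep : ∀ n m, n ≠ m → σ ≤ ‖x n - x m‖) : σ ≤ 1 := by
  apply _root_.le_of_forall_pos_le_add
  intro ε hε
  obtain ⟨K, hK⟩ := Metric.tendsto_atTop.mp (hmem 0).1 ε hε
  have hK' : ∀ k, K ≤ k → ‖(x 0 : ∀ i, PiLp 1 (fun _ : Fin i => ℝ)) k‖ ≤ ε := by
    intro k hk
    have := hK k hk
    rw [Real.dist_eq, sub_zero] at this
    exact le_of_lt (lt_of_le_of_lt (le_abs_self _) this)
  have hfin : (⋃ k ∈ Set.Iio K, ⋃ j : Fin k,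
      {n : ℕ | (x n : ∀ i, PiLp 1 (fun _ : Fin i => ℝ)) k j ≠ 0}).Finite := by
    apply Set.Finite.biUnion (Set.finite_Iio K)
    intro k _
    apply Set.finite_iUnion
    intro j
    apply Set.Subsingleton.finite
    intro a ha b hb
    by_contra hab
    rcases hdisj a b hab k j with h | h
    · exact ha h
    · exact hb h
  obtain ⟨n, hn⟩ := (hfin.insert 0).infinite_compl.nonempty
  simp only [Set.mem_compl_iff, Set.mem_insert_iff, not_or] at hn
  obtain ⟨hn0, hnS⟩ := hn
  have hzero : ∀ k, k < K → ∀ j : Fin k,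
      (x n : ∀ i, PiLp 1 (fun _ : Fin i => ℝ)) k j = 0 := by
    intro k hk j
    by_contra hne
    exact hnS (Set.mem_biUnion hk (Set.mem_iUnion.mpr ⟨j, hne⟩))
  refine (hsep 0 n (fun hc => hn0 hc.symm)).trans ?_
  apply lp.norm_le_of_forall_le (by linarith)
  intro k
  have hsplit : ((x 0 - x n : SumLinfty) : ∀ i, PiLp 1 (fun _ : Fin i => ℝ)) k
      = (x 0 : ∀ i, PiLp 1 (fun _ : Fin i => ℝ)) k
        - (x n : ∀ i, PiLp 1 (fun _ : Fin i => ℝ)) k := rfl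
  rw [hsplit]
  refine (norm_sub_le _ _).trans ?_
  rcases lt_or_ge k K with h | h
  · have hzn : ‖(x n : ∀ i, PiLp 1 (fun _ : Fin i => ℝ)) k‖ = 0 := by
      rw [block_norm]
      exact Finset.sum_eq_zero fun j _ => by rw [hzero k h j]; simp
    have h1 : ‖(x 0 : ∀ i, PiLp 1 (fun _ : Fin i => ℝ)) k‖ ≤ 1 :=
      (lp.norm_apply_le_norm ENNReal.top_ne_zero (x 0) k).trans (hmem 0).2
    linarith
  · have h1 : ‖(x n : ∀ i, PiLp 1 (fun _ : Fin i => ℝ)) k‖ ≤ 1 :=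
      (lp.norm_apply_le_norm ENNReal.top_ne_zero (x n) k).trans (hmem n).2
    have h2 := hK' k h
    linarith

/-! ### Main theorem -/

/-- The map `T : ℓ₁ → (⊕_n ℓ₁ⁿ)_{ℓ_∞}`, `T(ξ) = (ξ₁, (ξ₁,ξ₂), (ξ₁,ξ₂,ξ₃), …)` is
an isometric lattice embedding; consequently `K^⊥(X**) = 2` while `K^⊥(X) = 1`
for `X = (⊕_n ℓ₁ⁿ)_{c₀}` and `X** = (⊕_n ℓ₁ⁿ)_{ℓ_∞}`. -/
theorem sumC0_bidual_disjKottman :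
    (∃ T : lp (fun _ : ℕ => ℝ) 1 →ₗ[ℝ] SumLinfty,
      (∀ ξ, ‖T ξ‖ = ‖ξ‖) ∧
      (∀ ξ (n : ℕ) (j : Fin n),
        (T ξ : ∀ i, PiLp 1 (fun _ : Fin i => ℝ)) n j = (ξ : ℕ → ℝ) (j : ℕ)) ∧
      (∀ ξ ζ : lp (fun _ : ℕ => ℝ) 1, (∀ k, (ξ : ℕ → ℝ) k ≤ (ζ : ℕ → ℝ) k) →
        ∀ (n : ℕ) (j : Fin n),
          (T ξ : ∀ i, PiLp 1 (fun _ : Fin i => ℝ)) n j ≤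
          (T ζ : ∀ i, PiLp 1 (fun _ : Fin i => ℝ)) n j)) ∧
    disjKottmanSum Set.univ = 2 ∧ disjKottmanSum sumC0 = 1 := by
  refine ⟨⟨Tmap, Tmap_norm, fun ξ n j => Tmap_apply ξ n j, ?_⟩, ?_, ?_⟩
  · intro ξ ζ hle n j
    rw [Tmap_apply, Tmap_apply]
    exact hle j
  · -- `disjKottmanSum univ = 2`
    have hbound : ∀ σ ∈ {σ : ℝ | 0 < σ ∧ ∃ x : ℕ → SumLinfty,
        (∀ n, x n ∈ (Set.univ : Set SumLinfty) ∧ ‖x n‖ ≤ 1) ∧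
        (∀ n m, n ≠ m → ∀ (k : ℕ) (j : Fin k),
          (x n : ∀ i, PiLp 1 (fun _ : Fin i => ℝ)) k j = 0 ∨
          (x m : ∀ i, PiLp 1 (fun _ : Fin i => ℝ)) k j = 0) ∧
        ∀ n m, n ≠ m → σ ≤ ‖x n - x m‖}, σ ≤ 2 := by
      rintro σ ⟨-, x, hmem, -, hsep⟩
      refine (hsep 0 1 (by norm_num)).trans ?_
      calc ‖x 0 - x 1‖ ≤ ‖x 0‖ + ‖x 1‖ := norm_sub_le _ _
        _ ≤ 1 + 1 := add_le_add (hmem 0).2 (hmem 1).2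
        _ = 2 := by norm_num
    have hmem2 : (2:ℝ) ∈ {σ : ℝ | 0 < σ ∧ ∃ x : ℕ → SumLinfty,
        (∀ n, x n ∈ (Set.univ : Set SumLinfty) ∧ ‖x n‖ ≤ 1) ∧
        (∀ n m, n ≠ m → ∀ (k : ℕ) (j : Fin k),
          (x n : ∀ i, PiLp 1 (fun _ : Fin i => ℝ)) k j = 0 ∨
          (x m : ∀ i, PiLp 1 (fun _ : Fin i => ℝ)) k j = 0) ∧
        ∀ n m, n ≠ m → (2:ℝ) ≤ ‖x n - x m‖} :=
      ⟨by norm_num, gelt, fun n => ⟨Set.mem_univ _, gelt_norm_le n⟩,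
        fun n m h k j => gelt_disj h k j, fun n m h => gelt_sep h⟩
    exact le_antisymm (Real.sSup_le hbound (by norm_num))
      (le_csSup ⟨2, hbound⟩ hmem2)
  · -- `disjKottmanSum sumC0 = 1`
    have hbound : ∀ σ ∈ {σ : ℝ | 0 < σ ∧ ∃ x : ℕ → SumLinfty,
        (∀ n, x n ∈ sumC0 ∧ ‖x n‖ ≤ 1) ∧
        (∀ n m, n ≠ m → ∀ (k : ℕ) (j : Fin k),
          (x n : ∀ i, PiLp 1 (fun _ : Fin i => ℝ)) k j = 0 ∨
          (x m : ∀ i, PiLp 1 (fun _ : Fin i => ℝ)) k j = 0) ∧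
        ∀ n m, n ≠ m → σ ≤ ‖x n - x m‖}, σ ≤ 1 := by
      rintro σ ⟨-, x, hmem, hdisj, hsep⟩
      exact sumC0_upper x hmem hdisj hsep
    have hmem1 : (1:ℝ) ∈ {σ : ℝ | 0 < σ ∧ ∃ x : ℕ → SumLinfty,
        (∀ n, x n ∈ sumC0 ∧ ‖x n‖ ≤ 1) ∧
        (∀ n m, n ≠ m → ∀ (k : ℕ) (j : Fin k),
          (x n : ∀ i, PiLp 1 (fun _ : Fin i => ℝ)) k j = 0 ∨
          (x m : ∀ i, PiLp 1 (fun _ : Fin i => ℝ)) k j = 0) ∧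
        ∀ n m, n ≠ m → (1:ℝ) ≤ ‖x n - x m‖} :=
      ⟨by norm_num, helt, fun n => ⟨helt_memC0 n, helt_norm_le n⟩,
        fun n m h k j => helt_disj h k j, fun n m h => helt_sep h⟩
    exact le_antisymm (Real.sSup_le hbound (by norm_num))
      (le_csSup ⟨1, hbound⟩ hmem1)
end
end

section
/- Let M and N be closed subspaces of a Banach space Z. Then the James constants satisfy |Jm(M) − Jm(N)| ≤ 4·g(M,N), where Jm(X) = sup_{x,y ∈ S_X} min{‖x − y‖, ‖x + y‖} and g is the gap. Consequently the James constant is 4-Lipschitz with respect to the Kadets metric: |Jm(X) − Jm(Y)| ≤ 4·d_K(X,Y). -/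
noncomputable section
open Metric Set

lemma james_nonneg (X : Type*) [NormedAddCommGroup X] : 0 ≤ james X :=
  Real.sSup_nonneg fun t ⟨x, y, _, _, ht⟩ => ht ▸ le_min (norm_nonneg _) (norm_nonneg _)

lemma jamesSet_bddAbove (X : Type*) [NormedAddCommGroup X] :
    BddAbove {t : ℝ | ∃ x y : X, ‖x‖ = 1 ∧ ‖y‖ = 1 ∧ t = min ‖x - y‖ ‖x + y‖} := by
  refine ⟨2, ?_⟩
  rintro t ⟨x, y, hx, hy, rfl⟩
  calc min ‖x - y‖ ‖x + y‖ ≤ ‖x - y‖ := min_le_left _ _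
    _ ≤ ‖x‖ + ‖y‖ := norm_sub_le _ _
    _ = 2 := by rw [hx, hy]; norm_num

lemma james_le_two (X : Type*) [NormedAddCommGroup X] : james X ≤ 2 := by
  apply Real.sSup_le _ (by norm_num)
  rintro t ⟨x, y, hx, hy, rfl⟩
  calc min ‖x - y‖ ‖x + y‖ ≤ ‖x - y‖ := min_le_left _ _
    _ ≤ ‖x‖ + ‖y‖ := norm_sub_le _ _
    _ = 2 := by rw [hx, hy]; norm_num

lemma approx {Z : Type*} [NormedAddCommGroup Z] [NormedSpace ℝ Z] (M N : Submodule ℝ Z)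
    (x : Z) (hxM : x ∈ M) (hx : ‖x‖ = 1) (δ : ℝ) (hδ : 0 < δ)
    (hlt : gap (M : Set Z) (N : Set Z) + δ < 1) :
    ∃ u, u ∈ N ∧ ‖u‖ = 1 ∧ ‖x - u‖ ≤ 2 * (gap (M : Set Z) (N : Set Z) + δ) := by
  set g := gap (M : Set Z) (N : Set Z) with hg
  have h0N : (0 : Z) ∈ (N : Set Z) ∩ closedBall 0 1 :=
    ⟨N.zero_mem, mem_closedBall_self (by norm_num)⟩
  have hne : ((N : Set Z) ∩ closedBall 0 1).Nonempty := ⟨0, h0N⟩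
  have hbdd : BddAbove
      ((fun x => infDist x ((N : Set Z) ∩ closedBall 0 1)) '' ((M : Set Z) ∩ closedBall 0 1)) := by
    refine ⟨1, ?_⟩
    rintro _ ⟨z, ⟨_, hz⟩, rfl⟩
    calc infDist z ((N : Set Z) ∩ closedBall 0 1) ≤ dist z 0 := infDist_le_dist_of_mem h0N
      _ ≤ 1 := mem_closedBall.mp hz
  have hxmem : x ∈ (M : Set Z) ∩ closedBall 0 1 :=
    ⟨hxM, by simp [mem_closedBall, dist_zero_right, hx]⟩
  have h1 : infDist x ((N : Set Z) ∩ closedBall 0 1) ≤ g :=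
    le_trans (le_csSup hbdd ⟨x, hxmem, rfl⟩) (le_max_left _ _)
  obtain ⟨x', ⟨hx'N, _⟩, hdist⟩ := (infDist_lt_iff hne).mp (h1.trans_lt (by linarith : g < g + δ))
  rw [dist_eq_norm] at hdist
  have hx'norm : 1 - (g + δ) ≤ ‖x'‖ := by
    have h := norm_sub_norm_le x x'
    rw [hx] at h; linarith
  have hx'pos : 0 < ‖x'‖ := by linarith
  refine ⟨‖x'‖⁻¹ • x', N.smul_mem _ hx'N, ?_, ?_⟩
  · rw [norm_smul, norm_inv, norm_norm]
    field_simp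
  · have key : ‖x' - ‖x'‖⁻¹ • x'‖ ≤ ‖x - x'‖ := by
      have h1 : x' - ‖x'‖⁻¹ • x' = (1 - ‖x'‖⁻¹) • x' := by
        rw [sub_smul, one_smul]
      have h2 : (1 - ‖x'‖⁻¹) * ‖x'‖ = ‖x'‖ - 1 := by field_simp
      calc ‖x' - ‖x'‖⁻¹ • x'‖ = |1 - ‖x'‖⁻¹| * ‖x'‖ := by rw [h1, norm_smul, Real.norm_eq_abs]
        _ = |(1 - ‖x'‖⁻¹) * ‖x'‖| := by rw [abs_mul, abs_norm]
        _ = |‖x'‖ - 1| := by rw [h2]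
        _ = |‖x'‖ - ‖x‖| := by rw [hx]
        _ ≤ ‖x' - x‖ := abs_norm_sub_norm_le _ _
        _ = ‖x - x'‖ := norm_sub_rev _ _
    calc ‖x - ‖x'‖⁻¹ • x'‖ ≤ ‖x - x'‖ + ‖x' - ‖x'‖⁻¹ • x'‖ := norm_sub_le_norm_sub_add_norm_sub _ _ _
      _ ≤ ‖x - x'‖ + ‖x - x'‖ := by linarith
      _ ≤ 2 * (g + δ) := by linarith

lemma james_le_james_add {Z : Type*} [NormedAddCommGroup Z] [NormedSpace ℝ Z]
    (M N : Submodule ℝ Z) :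
    james M ≤ james N + 4 * gap (M : Set Z) (N : Set Z) := by
  set g := gap (M : Set Z) (N : Set Z) with hg
  have hg0 : 0 ≤ g := gap_nonneg _ _
  rcases le_or_gt (1/2 : ℝ) g with hbig | hsmall
  · have h2 := james_le_two (↥M)
    have h0 := james_nonneg (↥N)
    linarith
  · apply le_of_forall_pos_le_add
    intro ε hε
    apply Real.sSup_le _ (by have := james_nonneg (↥N); linarith)
    rintro t ⟨x, y, hx, hy, rfl⟩
    set δ : ℝ := min (ε/8) ((1-g)/2) with hδdef
    have hδ : 0 < δ := lt_min (by linarith) (by linarith)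
    have hδε : δ ≤ ε/8 := min_le_left _ _
    have hlt : g + δ < 1 := by
      have : δ ≤ (1-g)/2 := min_le_right _ _
      linarith
    obtain ⟨u, huN, hu1, hxu⟩ := approx M N (x : Z) x.2 hx δ hδ hlt
    obtain ⟨v, hvN, hv1, hyv⟩ := approx M N (y : Z) y.2 hy δ hδ hlt
    have hjN : min ‖(⟨u, huN⟩ : ↥N) - ⟨v, hvN⟩‖ ‖(⟨u, huN⟩ : ↥N) + ⟨v, hvN⟩‖ ≤ james N :=
      le_csSup (jamesSet_bddAbove _) ⟨⟨u, huN⟩, ⟨v, hvN⟩, hu1, hv1, rfl⟩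
    have huv_sub : ‖(⟨u, huN⟩ : ↥N) - ⟨v, hvN⟩‖ = ‖u - v‖ := rfl
    have huv_add : ‖(⟨u, huN⟩ : ↥N) + ⟨v, hvN⟩‖ = ‖u + v‖ := rfl
    have hxy_sub : ‖x - y‖ = ‖(x : Z) - (y : Z)‖ := rfl
    have hxy_add : ‖x + y‖ = ‖(x : Z) + (y : Z)‖ := rfl
    have hsub : ‖(x : Z) - (y : Z)‖ ≤ ‖u - v‖ + 4 * (g + δ) := by
      have t1 : ‖(x:Z) - (y:Z)‖ ≤ ‖(x:Z) - u‖ + ‖u - (y:Z)‖ := norm_sub_le_norm_sub_add_norm_sub _ _ _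
      have t2 : ‖u - (y:Z)‖ ≤ ‖u - v‖ + ‖v - (y:Z)‖ := norm_sub_le_norm_sub_add_norm_sub _ _ _
      have t3 : ‖v - (y:Z)‖ = ‖(y:Z) - v‖ := norm_sub_rev _ _
      linarith
    have hadd : ‖(x : Z) + (y : Z)‖ ≤ ‖u + v‖ + 4 * (g + δ) := by
      have : (x:Z) + y = (u + v) + (((x:Z) - u) + ((y:Z) - v)) := by abel
      rw [this]
      calc ‖(u + v) + (((x:Z) - u) + ((y:Z) - v))‖ ≤ ‖u + v‖ + (‖(x:Z) - u‖ + ‖(y:Z) - v‖) :=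
            (norm_add_le _ _).trans (by gcongr; exact norm_add_le _ _)
        _ ≤ ‖u + v‖ + 4 * (g + δ) := by linarith
    have hmin : min ‖(x:Z) - y‖ ‖(x:Z) + y‖ ≤ min ‖u - v‖ ‖u + v‖ + 4 * (g + δ) := by
      rcases le_total ‖u - v‖ ‖u + v‖ with h | h
      · rw [min_eq_left h]; exact (min_le_left _ _).trans hsub
      · rw [min_eq_right h]; exact (min_le_right _ _).trans hadd
    rw [hxy_sub, hxy_add]
    calc min ‖(x:Z) - y‖ ‖(x:Z) + y‖ ≤ min ‖u - v‖ ‖u + v‖ + 4 * (g + δ) := hmin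
      _ ≤ james N + 4 * (g + δ) := by rw [← huv_sub, ← huv_add]; linarith
      _ ≤ james N + 4 * g + ε := by linarith

lemma james_congr {X Y : Type*} [NormedAddCommGroup X] [NormedAddCommGroup Y]
    [NormedSpace ℝ X] [NormedSpace ℝ Y] (e : X ≃ₗᵢ[ℝ] Y) : james X = james Y := by
  unfold james
  congr 1
  ext t
  constructor
  · rintro ⟨x, y, hx, hy, rfl⟩
    exact ⟨e x, e y, by simp [hx], by simp [hy], by simp [← map_sub, ← map_add]⟩
  · rintro ⟨x, y, hx, hy, rfl⟩
    exact ⟨e.symm x, e.symm y, by simp [hx], by simp [hy], by simp [← map_sub, ← map_add]⟩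

def LinearIsometry.equivRange' {X W : Type*} [NormedAddCommGroup X] [NormedAddCommGroup W]
    [NormedSpace ℝ X] [NormedSpace ℝ W] (i : X →ₗᵢ[ℝ] W) :
    X ≃ₗᵢ[ℝ] ↥(LinearMap.range i.toLinearMap) :=
  { toLinearEquiv := LinearEquiv.ofInjective i.toLinearMap i.injective,
    norm_map' := fun x => by
      have h : ((LinearEquiv.ofInjective i.toLinearMap i.injective x :
          ↥(LinearMap.range i.toLinearMap)) : W) = i x := rfl
      rw [show ‖LinearEquiv.ofInjective i.toLinearMap i.injective x‖ =
        ‖((LinearEquiv.ofInjective i.toLinearMap i.injective x :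
          ↥(LinearMap.range i.toLinearMap)) : W)‖ from rfl, h, i.norm_map] }

lemma abs_james_sub_le {Z : Type*} [NormedAddCommGroup Z] [NormedSpace ℝ Z]
    (M N : Submodule ℝ Z) :
    |james M - james N| ≤ 4 * gap (M : Set Z) (N : Set Z) := by
  rw [abs_sub_le_iff]
  constructor
  · have := james_le_james_add M N; linarith
  · have := james_le_james_add N M; rw [gap_comm] at this; linarith

/-- The James constant satisfies `|Jm(M) - Jm(N)| ≤ 4 g(M,N)` for closed
subspaces of a common Banach space, and consequently it is `4`-Lipschitz with
respect to the Kadets metric. -/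
theorem james_gap_and_kadets_lipschitz :
    (∀ (Z : Type) (nZ : NormedAddCommGroup Z) (sZ : NormedSpace ℝ Z)
        (cZ : CompleteSpace Z) (M N : Submodule ℝ Z),
        IsClosed (M : Set Z) → IsClosed (N : Set Z) →
        |james M - james N| ≤ 4 * gap (M : Set Z) (N : Set Z)) ∧
    (∀ (X Y : Type) (nX : NormedAddCommGroup X) (sX : NormedSpace ℝ X)
        (cX : CompleteSpace X) (nY : NormedAddCommGroup Y) (sY : NormedSpace ℝ Y)
        (cY : CompleteSpace Y),
        |james X - james Y| ≤ 4 * kadets X Y) := by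
  constructor
  · intro Z nZ sZ cZ M N _ _
    exact abs_james_sub_le M N
  · intro X Y nX sX cX nY sY cY
    set S : Set ℝ := {d : ℝ | ∃ (W : Type) (nW : NormedAddCommGroup W) (sW : NormedSpace ℝ W)
      (cW : CompleteSpace W) (i : X →ₗᵢ[ℝ] W) (j : Y →ₗᵢ[ℝ] W),
      d = gap (Set.range i) (Set.range j)} with hS
    have hne : S.Nonempty := by
      refine ⟨gap (Set.range (⟨LinearMap.inl ℝ X Y, fun x => by
          simp [Prod.norm_def]⟩ : X →ₗᵢ[ℝ] X × Y))
        (Set.range (⟨LinearMap.inr ℝ X Y, fun y => by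
          simp [Prod.norm_def]⟩ : Y →ₗᵢ[ℝ] X × Y)), ?_⟩
      exact ⟨X × Y, inferInstance, inferInstance, inferInstance, _, _, rfl⟩
    have hkey : ∀ d ∈ S, |james X - james Y| / 4 ≤ d := by
      rintro d ⟨W, nW, sW, cW, i, j, rfl⟩
      have hX : james X = james ↥(LinearMap.range i.toLinearMap) :=
        james_congr i.equivRange'
      have hY : james Y = james ↥(LinearMap.range j.toLinearMap) :=
        james_congr j.equivRange'
      have h := abs_james_sub_le (LinearMap.range i.toLinearMap)
        (LinearMap.range j.toLinearMap)
      have hri : ((LinearMap.range i.toLinearMap : Submodule ℝ W) : Set W) = Set.range i := by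
        simp [LinearMap.coe_range]
      have hrj : ((LinearMap.range j.toLinearMap : Submodule ℝ W) : Set W) = Set.range j := by
        simp [LinearMap.coe_range]
      rw [hri, hrj] at h
      rw [hX, hY]
      linarith
    have h2 : |james X - james Y| / 4 ≤ sInf S := le_csInf hne hkey
    have h3 : kadets X Y = sInf S := rfl
    rw [h3]
    linarith
end
end

section
/- For every infinite-dimensional Banach space X, the symmetric Kottman constant dominates the Whitley thickness constant: K_s(X) ≥ T(X). -/
noncomputable section
open Metric Set

/-- For every infinite-dimensional Banach space, the symmetric Kottman constant
dominates the Whitley thickness constant: `K_s(X) ≥ T(X)`. -/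
theorem whitley_le_symKottman
    (X : Type) [NormedAddCommGroup X] [NormedSpace ℝ X] [CompleteSpace X]
    (hX : ¬ FiniteDimensional ℝ X) :
    whitley X ≤ symKottman X := by
  classical
  by_contra hlt
  push_neg at hlt
  have hSnonneg : 0 ≤ symKottman X :=
    Real.sSup_nonneg (fun σ hσ => hσ.1.le)
  set σ : ℝ := (symKottman X + whitley X) / 2 with hσdef
  have hσpos : 0 < σ := by simp only [hσdef]; linarith
  have hσlt : σ < whitley X := by simp only [hσdef]; linarith
  have hσgt : symKottman X < σ := by simp only [hσdef]; linarith
  -- σ is not a Whitley ε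
  have hnot : σ ∉ {ε : ℝ | 0 < ε ∧ ∃ F : Finset X, (∀ f ∈ F, ‖f‖ = 1) ∧
      ∀ x : X, ‖x‖ = 1 → ∃ f ∈ F, ‖x - f‖ ≤ ε} := by
    intro hmem
    have : whitley X ≤ σ := csInf_le ⟨0, fun ε hε => hε.1.le⟩ hmem
    linarith
  have key : ∀ F : Finset X, (∀ f ∈ F, ‖f‖ = 1) →
      ∃ z : X, ‖z‖ = 1 ∧ ∀ f ∈ F, σ < ‖z - f‖ := by
    intro F hF
    by_contra hc
    push_neg at hc
    exact hnot ⟨hσpos, F, hF, hc⟩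
  choose! y hy1 hy2 using key
  let Fs : ℕ → Finset X :=
    fun n => Nat.rec (∅ : Finset X) (fun _ Fn => insert (y Fn) (insert (-(y Fn)) Fn)) n
  have hFsucc : ∀ n, Fs (n + 1) = insert (y (Fs n)) (insert (-(y (Fs n))) (Fs n)) :=
    fun n => rfl
  have hA : ∀ n, ∀ f ∈ Fs n, ‖f‖ = 1 := by
    intro n
    induction n with
    | zero => intro f hf; simp [Fs] at hf
    | succ n ih =>
      intro f hf
      rw [hFsucc, Finset.mem_insert, Finset.mem_insert] at hf
      rcases hf with h | h | h
      · rw [h]; exact hy1 _ ih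
      · rw [h, norm_neg]; exact hy1 _ ih
      · exact ih f h
  have hmono : Monotone Fs := by
    apply monotone_nat_of_le_succ
    intro n
    rw [hFsucc]
    exact fun f hf => Finset.mem_insert_of_mem (Finset.mem_insert_of_mem hf)
  set xs : ℕ → X := fun n => y (Fs n) with hxs
  have hmem : ∀ m n, m < n → xs m ∈ Fs n ∧ -xs m ∈ Fs n := by
    intro m n hmn
    have h1 : xs m ∈ Fs (m + 1) := by rw [hFsucc]; exact Finset.mem_insert_self _ _
    have h2 : -xs m ∈ Fs (m + 1) := by
      rw [hFsucc]; exact Finset.mem_insert_of_mem (Finset.mem_insert_self _ _)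
    exact ⟨hmono hmn h1, hmono hmn h2⟩
  have hsep : ∀ n m, m < n → σ < ‖xs n - xs m‖ ∧ σ < ‖xs n + xs m‖ := by
    intro n m hmn
    obtain ⟨h1, h2⟩ := hmem m n hmn
    refine ⟨hy2 _ (hA n) _ h1, ?_⟩
    have := hy2 _ (hA n) _ h2
    rwa [sub_neg_eq_add] at this
  have hσmem : σ ∈ {τ : ℝ | 0 < τ ∧ ∃ x : ℕ → X, (∀ n, ‖x n‖ ≤ 1) ∧
      ∀ n m, n ≠ m → τ ≤ ‖x n - x m‖ ∧ τ ≤ ‖x n + x m‖} := by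
    refine ⟨hσpos, xs, fun n => (hy1 _ (hA n)).le, ?_⟩
    intro n m hnm
    rcases lt_or_gt_of_ne hnm with h | h
    · obtain ⟨h1, h2⟩ := hsep m n h
      exact ⟨by rw [norm_sub_rev]; exact h1.le, by rw [add_comm]; exact h2.le⟩
    · obtain ⟨h1, h2⟩ := hsep n m h
      exact ⟨h1.le, h2.le⟩
  have hbdd : BddAbove {τ : ℝ | 0 < τ ∧ ∃ x : ℕ → X, (∀ n, ‖x n‖ ≤ 1) ∧
      ∀ n m, n ≠ m → τ ≤ ‖x n - x m‖ ∧ τ ≤ ‖x n + x m‖} := by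
    refine ⟨2, fun τ hτ => ?_⟩
    obtain ⟨-, x, hx1, hx2⟩ := hτ
    calc τ ≤ ‖x 0 - x 1‖ := (hx2 0 1 (by norm_num)).1
      _ ≤ ‖x 0‖ + ‖x 1‖ := norm_sub_le _ _
      _ ≤ 2 := by linarith [hx1 0, hx1 1]
  have : σ ≤ symKottman X := le_csSup hbdd hσmem
  linarith
end
end
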